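/- arXiv:2604.21059 — 5 statements merged into one kernel-verified Lean document; each statement's English description precedes it below -/
import Mathlib

section
/- Let G be a free product of cyclic groups with the natural alphabet S of nontrivial powers of the generators within each factor, and let reduced words be those with no two adjacent letters from the same factor. If g ∈ G is represented by a cyclically reduced word of length at least 2 that is not self-overlapping, then the Brooks counting function φ_g(h) = C_g(h) − C_{g^{-1}}(h), counting occurrences of the reduced word of g minus occurrences of the reduced word of g^{-1} as subwords of the reduced word of h, is a quasimorphism with defect D(φ_g) ≤ 3. -/
open Monoid

variable {ι : Type*} [DecidableEq ι] {M : ι → Type*} [∀ i, Group (M i)]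
  [∀ i, DecidableEq (M i)] [∀ i, IsCyclic (M i)]

/-- The reduced word (as a list of letters) representing an element of a free product. -/
noncomputable def wordOf (g : CoprodI M) : List (Σ i, M i) :=
  (CoprodI.Word.equiv g).toList

/-- The number of occurrences of `w` as a (contiguous) subword of `l`. -/
def countOcc (w l : List (Σ i, M i)) : ℕ :=
  ((List.range (l.length + 1)).filter fun k => decide ((l.drop k).take w.length = w)).length

/-- The Brooks counting function `φ_g(h) = C_g(h) - C_{g⁻¹}(h)`. -/
noncomputable def brooks (g h : CoprodI M) : ℤ :=
  (countOcc (wordOf g) (wordOf h) : ℤ) - (countOcc (wordOf g⁻¹) (wordOf h) : ℤ)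

/-- A reduced word is cyclically reduced if (when it has length at least two) its first and
last letters lie in different factors. -/
def CyclicallyReduced (l : List (Σ i, M i)) : Prop :=
  2 ≤ l.length → ∀ x ∈ l.head?, ∀ y ∈ l.getLast?, x.1 ≠ y.1

/-- A word is self-overlapping if it can be written as `v ++ u ++ v` with `v` nontrivial. -/
def SelfOverlapping (l : List (Σ i, M i)) : Prop :=
  ∃ v u : List (Σ i, M i), v ≠ [] ∧ l = v ++ u ++ v

/-!
Write the reduced words of `h₁` and `h₂` as `a m₁ s` and `s⁻¹ m₂ b`, where `s` is the part that
cancels and each `mᵢ` has at most one letter, so that `h₁ h₂` has reduced word `a m₃ b`.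
The occurrences of `p` in `x m y` are those in `x`, those in `y`, and those meeting `m` or both
`x` and `y`; two of the latter would overlap, so there is at most one when `p` is not
self-overlapping. Hence `φ_p (x m y) - φ_p x - φ_p y ∈ [-1, 1]`, and since `φ_p s⁻¹ = -φ_p s`,
the defect `φ_g h₁ + φ_g h₂ - φ_g (h₁ h₂)` is a sum of three such errors.
-/

open Finset

section Occurrences

variable {α : Type*} [DecidableEq α]

def occurrences (p l : List α) : Finset ℕ :=
  (range (l.length + 1)).filter fun k => (l.drop k).take p.length = p

theorem mem_occurrences {p l : List α} {k : ℕ} :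
    k ∈ occurrences p l ↔ k ≤ l.length ∧ (l.drop k).take p.length = p := by
  simp [occurrences]

theorem mem_occurrences_iff_exists_append {p l : List α} {k : ℕ} :
    k ∈ occurrences p l ↔ ∃ a b, l = a ++ p ++ b ∧ a.length = k := by
  rw [mem_occurrences]
  constructor
  · rintro ⟨hk, hocc⟩
    refine ⟨l.take k, l.drop (k + p.length), ?_, by simpa using hk⟩
    calc l = l.take k ++ ((l.drop k).take p.length ++ (l.drop k).drop p.length) := by
          simp only [List.take_append_drop]
      _ = l.take k ++ p ++ l.drop (k + p.length) := by
          rw [hocc, List.drop_drop, List.append_assoc]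
  · rintro ⟨a, b, rfl, rfl⟩
    simp

theorem add_length_le_of_mem_occurrences {p l : List α} {k : ℕ}
    (hk : k ∈ occurrences p l) : k + p.length ≤ l.length := by
  obtain ⟨hk, hocc⟩ := mem_occurrences.mp hk
  have hlen := congrArg List.length hocc
  simp only [List.length_take, List.length_drop] at hlen
  omega

theorem mem_occurrences_append_left {p u w : List α} {k : ℕ} (hk : k + p.length ≤ u.length) :
    k ∈ occurrences p (u ++ w) ↔ k ∈ occurrences p u := by
  rw [mem_occurrences, mem_occurrences, List.drop_append_of_le_length (by omega),
    List.take_append_of_le_length (by simp; omega)]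
  simp only [List.length_append]
  constructor <;> rintro ⟨_, h⟩ <;> exact ⟨by omega, h⟩

theorem add_mem_occurrences_append {p u w : List α} {j : ℕ} :
    u.length + j ∈ occurrences p (u ++ w) ↔ j ∈ occurrences p w := by
  simp [mem_occurrences, List.drop_append, List.drop_eq_nil_of_le]

theorem card_occurrences_add_le_card_occurrences_append {p : List α} (hp : p ≠ [])
    (u w : List α) : #(occurrences p u) + #(occurrences p w) ≤ #(occurrences p (u ++ w)) := by
  have hdisj : Disjoint (occurrences p u) ((occurrences p w).image (u.length + ·)) := by
    rw [disjoint_left]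
    rintro k hk hk'
    obtain ⟨j, -, rfl⟩ := mem_image.mp hk'
    have := add_length_le_of_mem_occurrences hk
    have : p.length ≠ 0 := by simpa using hp
    omega
  have hsub : occurrences p u ∪ (occurrences p w).image (u.length + ·) ⊆
      occurrences p (u ++ w) := by
    refine union_subset (fun k hk => ?_) (fun k hk => ?_)
    · exact (mem_occurrences_append_left (add_length_le_of_mem_occurrences hk)).mpr hk
    · obtain ⟨j, hj, rfl⟩ := mem_image.mp hk
      exact add_mem_occurrences_append.mpr hj
  calc #(occurrences p u) + #(occurrences p w)
      = #(occurrences p u ∪ (occurrences p w).image (u.length + ·)) := by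
        rw [card_union_of_disjoint hdisj, card_image_of_injective _ (add_right_injective _)]
    _ ≤ _ := card_le_card hsub

end Occurrences

section FreeProductWords

variable {κ : Type*} {N : κ → Type*}

/-- A border of length `t ≤ |p| / 2` exhibits `p = v ++ u ++ v` directly; a longer one yields the
shorter border of length `2t - |p|`, as `p` has period `|p| - t`. -/
theorem SelfOverlapping.of_take_eq_drop {p : List (Σ k, N k)} {t : ℕ} (ht₀ : 0 < t)
    (ht : t < p.length) (hborder : p.take t = p.drop (p.length - t)) : SelfOverlapping p := by
  induction t using Nat.strong_induction_on with
  | _ t ih =>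
  by_cases hhalf : 2 * t ≤ p.length
  · refine ⟨p.take t, (p.drop t).take (p.length - 2 * t),
      List.ne_nil_of_length_pos (by simp; omega), ?_⟩
    calc p = p.take t ++ ((p.drop t).take (p.length - 2 * t) ++
          (p.drop t).drop (p.length - 2 * t)) := by simp only [List.take_append_drop]
      _ = _ := by
          rw [List.drop_drop, show t + (p.length - 2 * t) = p.length - t by omega, ← hborder,
            List.append_assoc]
  · set d := p.length - t
    have hshorter : p.take (t - d) = p.drop (p.length - (t - d)) :=
      calc p.take (t - d) = (p.drop d).drop d := by
            rw [← hborder, List.drop_take, ← hborder, List.take_take, min_eq_left (by omega)]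
        _ = p.drop (p.length - (t - d)) := by rw [List.drop_drop]; congr 1; omega
    exact ih (t - d) (by omega) (by omega) (by omega) hshorter

theorem SelfOverlapping.of_overlap {p w : List (Σ k, N k)} {k k' : ℕ}
    (hk : (w.drop k).take p.length = p) (hk' : (w.drop k').take p.length = p)
    (hlt : k < k') (hlt' : k' < k + p.length) : SelfOverlapping p := by
  refine .of_take_eq_drop (t := p.length - (k' - k)) (by omega) (by omega) ?_
  rw [show p.length - (p.length - (k' - k)) = k' - k by omega]
  calc p.take (p.length - (k' - k))
      = ((w.drop k').take p.length).take (p.length - (k' - k)) := by rw [hk']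
    _ = ((w.drop k).take p.length).drop (k' - k) := by
        rw [List.take_take, min_eq_left (by omega), List.drop_take, List.drop_drop,
          show k + (k' - k) = k' by omega]
    _ = p.drop (k' - k) := by rw [hk]

/-- Occurrences that meet both `u` and `v`, or meet the at most one letter of `m`, start within
less than `|p|` of each other, so there is at most one of them unless `p` overlaps itself. -/
theorem card_occurrences_append_append_le [DecidableEq (Σ k, N k)] {p : List (Σ k, N k)}
    (hp : ¬SelfOverlapping p) (u : List (Σ k, N k)) {m : List (Σ k, N k)} (hm : m.length ≤ 1)
    (v : List (Σ k, N k)) :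
    #(occurrences p (u ++ m ++ v)) ≤ #(occurrences p u) + #(occurrences p v) + 1 := by
  set crossing := (occurrences p (u ++ m ++ v)).filter
    fun k => u.length < k + p.length ∧ k < u.length + m.length
  have hcrossing : #crossing ≤ 1 := by
    rw [card_le_one]
    intro k hk k' hk'
    simp only [crossing, mem_filter, mem_occurrences] at hk hk'
    by_contra hne
    rcases Nat.lt_or_gt_of_ne hne with hlt | hlt
    · exact hp (.of_overlap hk.1.2 hk'.1.2 hlt (by omega))
    · exact hp (.of_overlap hk'.1.2 hk.1.2 hlt (by omega))
  have hsub : occurrences p (u ++ m ++ v) ⊆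
      occurrences p u ∪ (occurrences p v).image ((u ++ m).length + ·) ∪ crossing := by
    intro k hk
    simp only [mem_union, mem_image, crossing, mem_filter]
    by_cases hleft : k + p.length ≤ u.length
    · rw [List.append_assoc, mem_occurrences_append_left hleft] at hk
      exact .inl (.inl hk)
    by_cases hright : (u ++ m).length ≤ k
    · obtain ⟨j, rfl⟩ := Nat.exists_eq_add_of_le hright
      exact .inl (.inr ⟨j, add_mem_occurrences_append.mp hk, rfl⟩)
    · simp only [List.length_append] at hright
      exact .inr ⟨hk, by omega, by omega⟩
  calc #(occurrences p (u ++ m ++ v))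
      ≤ #(occurrences p u ∪ (occurrences p v).image ((u ++ m).length + ·) ∪ crossing) :=
        card_le_card hsub
    _ ≤ #(occurrences p u) + #(occurrences p v) + 1 := by
        grw [card_union_le, card_union_le, card_image_le, hcrossing]

variable [∀ k, Group (N k)]

def invRev (l : List (Σ k, N k)) : List (Σ k, N k) :=
  (l.map fun x => ⟨x.1, x.2⁻¹⟩).reverse

@[simp]
theorem invRev_nil : invRev ([] : List (Σ k, N k)) = [] := rfl

@[simp]
theorem length_invRev (l : List (Σ k, N k)) : (invRev l).length = l.length := by
  simp [invRev]

@[simp]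
theorem invRev_append (l₁ l₂ : List (Σ k, N k)) :
    invRev (l₁ ++ l₂) = invRev l₂ ++ invRev l₁ := by
  simp [invRev]

@[simp]
theorem invRev_singleton (x : Σ k, N k) : invRev [x] = [⟨x.1, x.2⁻¹⟩] := rfl

@[simp]
theorem invRev_invRev (l : List (Σ k, N k)) : invRev (invRev l) = l := by
  simp [invRev, Function.comp_def]

@[simp]
theorem invRev_eq_nil {l : List (Σ k, N k)} : invRev l = [] ↔ l = [] := by
  simp [invRev]

theorem SelfOverlapping.of_invRev {p : List (Σ k, N k)} (h : SelfOverlapping (invRev p)) :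
    SelfOverlapping p := by
  obtain ⟨v, u, hv, hp⟩ := h
  refine ⟨invRev v, invRev u, by simpa using hv, ?_⟩
  simpa [List.append_assoc] using congrArg invRev hp

theorem card_occurrences_le_card_occurrences_invRev [DecidableEq (Σ k, N k)]
    (p l : List (Σ k, N k)) : #(occurrences p l) ≤ #(occurrences (invRev p) (invRev l)) := by
  refine card_le_card_of_injOn (fun k => l.length - p.length - k) (fun k hk => ?_) ?_
  · obtain ⟨a, b, rfl, rfl⟩ := mem_occurrences_iff_exists_append.mp hk
    refine mem_occurrences_iff_exists_append.mpr ⟨invRev b, invRev a, by simp, ?_⟩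
    simp only [List.length_append, length_invRev]
    omega
  · intro k hk k' hk' hkk'
    have := add_length_le_of_mem_occurrences (mem_coe.mp hk)
    have := add_length_le_of_mem_occurrences (mem_coe.mp hk')
    simp only at hkk'
    omega

theorem card_occurrences_invRev [DecidableEq (Σ k, N k)] (p l : List (Σ k, N k)) :
    #(occurrences (invRev p) (invRev l)) = #(occurrences p l) :=
  le_antisymm (by simpa using card_occurrences_le_card_occurrences_invRev (invRev p) (invRev l))
    (card_occurrences_le_card_occurrences_invRev p l)

def brooksWord [DecidableEq (Σ k, N k)] (p l : List (Σ k, N k)) : ℤ :=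
  #(occurrences p l) - #(occurrences (invRev p) l)

theorem brooksWord_invRev [DecidableEq (Σ k, N k)] (p l : List (Σ k, N k)) :
    brooksWord p (invRev l) = -brooksWord p l := by
  have h₁ := card_occurrences_invRev p l
  have h₂ := card_occurrences_invRev (invRev p) l
  rw [invRev_invRev] at h₂
  simp only [brooksWord]
  omega

theorem abs_brooksWord_append_append_sub_le [DecidableEq (Σ k, N k)] {p : List (Σ k, N k)}
    (hp : p ≠ []) (hso : ¬SelfOverlapping p) (u : List (Σ k, N k)) {m : List (Σ k, N k)}
    (hm : m.length ≤ 1) (v : List (Σ k, N k)) :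
    |brooksWord p (u ++ m ++ v) - (brooksWord p u + brooksWord p v)| ≤ 1 := by
  have hp' : invRev p ≠ [] := by simpa using hp
  have hso' : ¬SelfOverlapping (invRev p) := fun h => hso h.of_invRev
  have := card_occurrences_add_le_card_occurrences_append hp u m
  have := card_occurrences_add_le_card_occurrences_append hp (u ++ m) v
  have := card_occurrences_add_le_card_occurrences_append hp' u m
  have := card_occurrences_add_le_card_occurrences_append hp' (u ++ m) v
  have := card_occurrences_append_append_le hso u hm v
  have := card_occurrences_append_append_le hso' u hm v
  simp only [brooksWord, abs_le]
  omega

def prodList (L : List (Σ k, N k)) : CoprodI N :=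
  (L.map fun x => CoprodI.of x.2).prod

@[simp]
theorem prodList_nil : prodList ([] : List (Σ k, N k)) = 1 := rfl

@[simp]
theorem prodList_cons (x : Σ k, N k) (L : List (Σ k, N k)) :
    prodList (x :: L) = CoprodI.of x.2 * prodList L := by
  simp [prodList]

@[simp]
theorem prodList_append (L₁ L₂ : List (Σ k, N k)) :
    prodList (L₁ ++ L₂) = prodList L₁ * prodList L₂ := by
  simp [prodList]

theorem prodList_invRev (L : List (Σ k, N k)) : prodList (invRev L) = (prodList L)⁻¹ := by
  induction L with
  | nil => simp
  | cons x L ih => rw [← List.singleton_append, invRev_append, prodList_append, ih]; simp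

/-- The lists of letters underlying the elements of `CoprodI.Word N`. -/
def IsReducedWord (L : List (Σ k, N k)) : Prop :=
  (∀ x ∈ L, x.2 ≠ 1) ∧ L.IsChain fun x y => x.1 ≠ y.1

theorem isReducedWord_append {L₁ L₂ : List (Σ k, N k)} :
    IsReducedWord (L₁ ++ L₂) ↔
      IsReducedWord L₁ ∧ IsReducedWord L₂ ∧ ∀ x ∈ L₁.getLast?, ∀ y ∈ L₂.head?, x.1 ≠ y.1 := by
  simp only [IsReducedWord, List.mem_append, List.isChain_append]
  grind

@[simp]
theorem isReducedWord_singleton {k : κ} {x : N k} : IsReducedWord [⟨k, x⟩] ↔ x ≠ 1 := by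
  simp [IsReducedWord]

theorem IsReducedWord.invRev {L : List (Σ k, N k)} (h : IsReducedWord L) :
    IsReducedWord (invRev L) := by
  refine ⟨fun x hx => ?_, ?_⟩
  · obtain ⟨y, hy, rfl⟩ := List.mem_map.mp (List.mem_reverse.mp hx)
    simpa using h.1 y hy
  · rw [_root_.invRev, List.isChain_reverse, List.isChain_map]
    exact h.2.imp fun x y hxy => Ne.symm hxy

theorem exists_reduced_mul_eq {A B : List (Σ k, N k)} (hA : IsReducedWord A)
    (hB : IsReducedWord B) :
    ∃ a s b m₁ m₂ m₃ : List (Σ k, N k), A = a ++ m₁ ++ s ∧ B = invRev s ++ m₂ ++ b ∧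
      IsReducedWord (a ++ m₃ ++ b) ∧ prodList A * prodList B = prodList (a ++ m₃ ++ b) ∧
      m₁.length ≤ 1 ∧ m₂.length ≤ 1 ∧ m₃.length ≤ 1 := by
  induction A using List.reverseRecOn generalizing B with
  | nil => exact ⟨[], [], B, [], [], [], by simp, by simp, by simpa, by simp, by simp, by simp,
      by simp⟩
  | append_singleton A x ih =>
    obtain ⟨i, u⟩ := x
    obtain ⟨hA', -, hAu⟩ := isReducedWord_append.mp hA
    rcases B with _ | ⟨⟨j, v⟩, B⟩
    · exact ⟨A ++ [⟨i, u⟩], [], [], [], [], [], by simp, by simp, by simpa, by simp, by simp,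
        by simp, by simp⟩
    obtain ⟨-, hB', hvB⟩ :=
      isReducedWord_append.mp (show IsReducedWord ([⟨j, v⟩] ++ B) from hB)
    by_cases hij : i = j
    swap
    · refine ⟨A ++ [⟨i, u⟩], [], ⟨j, v⟩ :: B, [], [], [], by simp, by simp, ?_,
        by simp [mul_assoc], by simp, by simp, by simp⟩
      simpa using isReducedWord_append.mpr ⟨hA, hB, by simpa using hij⟩
    subst hij
    by_cases huv : u * v = 1
    · obtain ⟨a, s, b, m₁, m₂, m₃, rfl, rfl, hred, hprod, hm₁, hm₂, hm₃⟩ := ih hA' hB'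
      refine ⟨a, s ++ [⟨i, u⟩], b, m₁, m₂, m₃, by simp, ?_, hred, ?_, hm₁, hm₂, hm₃⟩
      · rw [eq_inv_of_mul_eq_one_right huv]; simp
      · rw [← hprod]
        simp only [prodList_append, prodList_cons, prodList_nil, mul_one, mul_assoc]
        rw [← mul_assoc (CoprodI.of u), ← map_mul, huv, map_one, one_mul]
    · refine ⟨A, [], B, [⟨i, u⟩], [⟨i, v⟩], [⟨i, u * v⟩], by simp, by simp, ?_, ?_, by simp,
        by simp, by simp⟩
      · refine isReducedWord_append.mpr
          ⟨isReducedWord_append.mpr ⟨hA', by simpa using huv, by simpa using hAu⟩, hB', ?_⟩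
        simpa using hvB
      · simp [mul_assoc]

variable [DecidableEq κ] [∀ k, DecidableEq (N k)]

theorem wordOf_prodList {L : List (Σ k, N k)} (h : IsReducedWord L) : wordOf (prodList L) = L :=
  congrArg CoprodI.Word.toList (CoprodI.Word.equiv.apply_symm_apply ⟨L, h.1, h.2⟩)

theorem prodList_wordOf (g : CoprodI N) : prodList (wordOf g) = g :=
  CoprodI.Word.equiv.symm_apply_apply g

theorem isReducedWord_wordOf (g : CoprodI N) : IsReducedWord (wordOf g) :=
  ⟨(CoprodI.Word.equiv g).ne_one, (CoprodI.Word.equiv g).chain_ne⟩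

theorem wordOf_inv (g : CoprodI N) : wordOf g⁻¹ = invRev (wordOf g) := by
  conv_lhs => rw [← prodList_wordOf g, ← prodList_invRev]
  exact wordOf_prodList (isReducedWord_wordOf g).invRev

theorem exists_wordOf_mul_eq (h₁ h₂ : CoprodI N) :
    ∃ a s b m₁ m₂ m₃ : List (Σ k, N k), wordOf h₁ = a ++ m₁ ++ s ∧
      wordOf h₂ = invRev s ++ m₂ ++ b ∧ wordOf (h₁ * h₂) = a ++ m₃ ++ b ∧
      m₁.length ≤ 1 ∧ m₂.length ≤ 1 ∧ m₃.length ≤ 1 := by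
  obtain ⟨a, s, b, m₁, m₂, m₃, e₁, e₂, hred, hprod, hm⟩ :=
    exists_reduced_mul_eq (isReducedWord_wordOf h₁) (isReducedWord_wordOf h₂)
  refine ⟨a, s, b, m₁, m₂, m₃, e₁, e₂, ?_, hm⟩
  rw [← wordOf_prodList hred, ← hprod, prodList_wordOf, prodList_wordOf]

theorem brooks_eq_brooksWord (g h : CoprodI N) :
    brooks g h = brooksWord (wordOf g) (wordOf h) := by
  rw [brooks, brooksWord, wordOf_inv]
  rfl

end FreeProductWords

theorem brooks_defect_le_three_general (g : CoprodI M)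
    (hlen : 2 ≤ (wordOf g).length)
    (hso : ¬ SelfOverlapping (wordOf g)) :
    ∀ h₁ h₂ : CoprodI M, |brooks g h₁ + brooks g h₂ - brooks g (h₁ * h₂)| ≤ 3 := by
  intro h₁ h₂
  have hp : wordOf g ≠ [] := List.ne_nil_of_length_pos (by omega)
  obtain ⟨a, s, b, m₁, m₂, m₃, e₁, e₂, e₃, hm₁, hm₂, hm₃⟩ := exists_wordOf_mul_eq h₁ h₂
  have d₁ := abs_brooksWord_append_append_sub_le hp hso a hm₁ s
  have d₂ := abs_brooksWord_append_append_sub_le hp hso (invRev s) hm₂ b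
  have d₃ := abs_brooksWord_append_append_sub_le hp hso a hm₃ b
  rw [brooksWord_invRev] at d₂
  simp only [brooks_eq_brooksWord, e₁, e₂, e₃]
  rw [abs_le] at d₁ d₂ d₃ ⊢
  constructor <;> linarith

/-- The Brooks counting function of a cyclically reduced, non-self-overlapping word of
length at least two is a quasimorphism of defect at most 3. -/
theorem brooks_defect_le_three (g : CoprodI M)
    (hlen : 2 ≤ (wordOf g).length)
    (hcyc : CyclicallyReduced (wordOf g))
    (hso : ¬ SelfOverlapping (wordOf g)) :
    ∀ h₁ h₂ : CoprodI M, |brooks g h₁ + brooks g h₂ - brooks g (h₁ * h₂)| ≤ 3 :=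
  brooks_defect_le_three_general g hlen hso
end

section
/- Let G be a free product of cyclic groups and let g be represented by a cyclically reduced, non-self-overlapping word of length at least 2. If g is not conjugate to g^{-1}, then the homogenization of the Brooks quasimorphism φ_g satisfies φ̄_g(g) = 1. -/
open Monoid

variable {ι : Type*} [DecidableEq ι] {M : ι → Type*} [∀ i, Group (M i)]
  [∀ i, DecidableEq (M i)] [∀ i, IsCyclic (M i)]

/-!
Write `w` for the reduced word of `g`. Since `w` is cyclically reduced, the reduced word of `g ^ n`
is the `n`-fold concatenation of `w`, and its subword of length `|w|` starting at position `k` is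
the rotation of `w` by `k`. A rotation by `0 < r < |w|` fixing `w` would exhibit `w` as
`v ++ u ++ v` with `v` the first `min r (|w| - r)` letters, so `w` occurs exactly at the `n`
positions divisible by `|w|`. The reduced word of `g⁻¹` also has length `|w|`, so an occurrence of
it would be a rotation of `w`, making `g⁻¹` a cyclic conjugate of `g`. Hence `φ_g(g ^ n) = n`.
-/

theorem isConj_mul_comm {G : Type*} [Group G] (a b : G) : IsConj (a * b) (b * a) :=
  isConj_iff.2 ⟨b, by group⟩

namespace List

variable {α : Type*}

theorem length_flatten_replicate (w : List α) (n : ℕ) :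
    (replicate n w).flatten.length = n * w.length := by
  simp

theorem getElem_flatten_replicate (w : List α) (n j : ℕ) (h : j < (replicate n w).flatten.length) :
    (replicate n w).flatten[j] = w[j % w.length]'(Nat.mod_lt _ (by
      rcases w with _ | _ <;> simp_all)) := by
  induction n generalizing j with
  | zero => simp at h
  | succ n ih =>
    simp only [replicate_succ, flatten_cons, getElem_append]
    split_ifs with hj
    · simp [Nat.mod_eq_of_lt hj]
    · rw [ih]
      simp [Nat.mod_eq_sub_mod (not_lt.1 hj)]

theorem take_drop_flatten_replicate (w : List α) {n k : ℕ} (hk : k + w.length ≤ n * w.length) :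
    ((replicate n w).flatten.drop k).take w.length = w.rotate k := by
  apply ext_getElem
  · simp only [length_take, length_drop, length_flatten_replicate, length_rotate]
    omega
  · intro i _ _
    simp only [getElem_take, getElem_drop, getElem_flatten_replicate, getElem_rotate,
      Nat.add_comm k]

theorem take_drop_flatten_replicate_eq_iff {w v : List α} (hw : w ≠ [])
    (hv : v.length = w.length) {n k : ℕ} :
    ((replicate n w).flatten.drop k).take w.length = v ↔
      k + w.length ≤ n * w.length ∧ w.rotate k = v := by
  constructor
  · intro h
    have hk : k + w.length ≤ n * w.length := by
      have := congrArg length h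
      simp only [length_take, length_drop, length_flatten_replicate, hv] at this
      have := length_pos_iff.2 hw
      omega
    exact ⟨hk, by rwa [take_drop_flatten_replicate w hk] at h⟩
  · rintro ⟨hk, rfl⟩
    exact take_drop_flatten_replicate w hk

theorem isRotated_of_take_drop_flatten_replicate {w v : List α} {n k : ℕ}
    (hv : v.length = w.length) (h : ((replicate n w).flatten.drop k).take v.length = v) :
    w ~r v := by
  rcases eq_or_ne w [] with rfl | hw
  · rw [length_eq_zero_iff.1 hv]
  rw [hv, take_drop_flatten_replicate_eq_iff hw hv] at h
  exact ⟨k, h.2⟩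

theorem exists_eq_append_append_of_rotate_eq_self {w : List α} {r : ℕ} (hr0 : 0 < r)
    (hr : r < w.length) (h : w.rotate r = w) : ∃ v u, v ≠ [] ∧ w = v ++ u ++ v := by
  wlog hr2 : 2 * r ≤ w.length generalizing r
  · refine this (r := w.length - r) (by omega) (by omega) ?_ (by omega)
    have := rotate_rotate w r (w.length - r)
    rwa [h, Nat.add_sub_cancel' hr.le, rotate_length] at this
  have hw : w = w.drop r ++ w.take r := by
    rw [← rotate_eq_drop_append_take hr.le, h]
  have hprefix : (w.drop r).take r = w.take r := by
    conv_rhs => rw [hw]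
    rw [take_append_of_le_length (by rw [length_drop]; omega)]
  refine ⟨w.take r, (w.drop r).drop r, ne_nil_of_length_pos (by rw [length_take]; omega), ?_⟩
  calc w = w.drop r ++ w.take r := hw
    _ = (w.drop r).take r ++ (w.drop r).drop r ++ w.take r := by rw [take_append_drop]
    _ = w.take r ++ (w.drop r).drop r ++ w.take r := by rw [hprefix]

theorem isConj_prod_rotate {G : Type*} [Group G] (l : List G) (n : ℕ) :
    IsConj l.prod (l.rotate n).prod := by
  rw [rotate_eq_drop_append_take_mod, prod_append]
  conv_lhs => rw [← take_append_drop (n % l.length) l, prod_append]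
  exact isConj_mul_comm _ _

theorem IsRotated.isConj_prod {G : Type*} [Group G] {l l' : List G} (h : l ~r l') :
    IsConj l.prod l'.prod := by
  obtain ⟨n, rfl⟩ := h
  exact isConj_prod_rotate l n

end List

section Words

-- Fresh names for the factors, so that the ambient `IsCyclic` assumption is not included.
variable {κ : Type*} {N : κ → Type*}

open List

theorem dvd_length_of_rotate_eq_self {w : List (Σ k, N k)} (hw : w ≠ [])
    (hso : ¬ SelfOverlapping w) {k : ℕ} (h : w.rotate k = w) : w.length ∣ k := by
  by_contra hk
  exact hso (exists_eq_append_append_of_rotate_eq_self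
    (Nat.pos_of_ne_zero fun h0 => hk (Nat.dvd_of_mod_eq_zero h0))
    (Nat.mod_lt k (length_pos_iff.2 hw)) (by rwa [rotate_mod]))

theorem take_drop_flatten_replicate_eq_self_iff {w : List (Σ k, N k)} (hw : w ≠ [])
    (hso : ¬ SelfOverlapping w) {n k : ℕ} :
    ((replicate n w).flatten.drop k).take w.length = w ↔ ∃ m < n, m * w.length = k := by
  rw [take_drop_flatten_replicate_eq_iff hw rfl]
  constructor
  · rintro ⟨hk, hrot⟩
    obtain ⟨m, rfl⟩ := dvd_length_of_rotate_eq_self hw hso hrot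
    have := length_pos_iff.2 hw
    exact ⟨m, by nlinarith, mul_comm _ _⟩
  · rintro ⟨m, hm, rfl⟩
    exact ⟨by nlinarith, by rw [mul_comm, rotate_length_mul]⟩

variable [DecidableEq κ] [∀ k, DecidableEq (N k)]

open Finset in
theorem countOcc_eq_card (w l : List (Σ k, N k)) :
    countOcc w l = #{k ∈ range (l.length + 1) | (l.drop k).take w.length = w} :=
  rfl

theorem countOcc_flatten_replicate {w : List (Σ k, N k)} (hw : w ≠ [])
    (hso : ¬ SelfOverlapping w) (n : ℕ) : countOcc w (replicate n w).flatten = n := by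
  have hpos := length_pos_iff.2 hw
  have hpositions : {k ∈ Finset.range ((replicate n w).flatten.length + 1) |
      ((replicate n w).flatten.drop k).take w.length = w} =
      (Finset.range n).map ⟨(· * w.length), mul_left_injective₀ hpos.ne'⟩ := by
    ext k
    simp only [Finset.mem_filter, Finset.mem_range, Finset.mem_map, Function.Embedding.coeFn_mk,
      take_drop_flatten_replicate_eq_self_iff hw hso, and_iff_right_iff_imp]
    rintro ⟨m, hm, rfl⟩
    rw [length_flatten_replicate]
    nlinarith
  rw [countOcc_eq_card, hpositions, Finset.card_map, Finset.card_range]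

theorem countOcc_flatten_replicate_eq_zero {w v : List (Σ k, N k)} (hv : v.length = w.length)
    (hrot : ¬ w ~r v) (n : ℕ) : countOcc v (replicate n w).flatten = 0 := by
  rw [countOcc_eq_card, Finset.card_eq_zero, Finset.filter_eq_empty_iff]
  exact fun _ _ h => hrot (isRotated_of_take_drop_flatten_replicate hv h)

end Words

section FreeProduct

variable {κ : Type*} {N : κ → Type*} [∀ k, Group (N k)]

open CoprodI List

noncomputable def wordProd (l : List (Σ k, N k)) : CoprodI N :=
  (l.map fun x => of x.2).prod

theorem List.IsRotated.isConj_wordProd {l l' : List (Σ k, N k)} (h : l ~r l') :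
    IsConj (wordProd l) (wordProd l') :=
  (h.map _).isConj_prod

variable [DecidableEq κ] [∀ k, DecidableEq (N k)]

theorem wordProd_wordOf (g : CoprodI N) : wordProd (wordOf g) = g :=
  Word.equiv.symm_apply_apply g

theorem wordOf_wordProd {l : List (Σ k, N k)} (hne : ∀ x ∈ l, x.2 ≠ 1)
    (hchain : l.IsChain fun a b => a.1 ≠ b.1) : wordOf (wordProd l) = l :=
  congrArg Word.toList (Word.equiv.apply_symm_apply ⟨l, hne, hchain⟩)

theorem wordOf_ne_one (g : CoprodI N) : ∀ x ∈ wordOf g, x.2 ≠ 1 :=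
  (Word.equiv g).ne_one

theorem isChain_wordOf (g : CoprodI N) : (wordOf g).IsChain fun a b => a.1 ≠ b.1 :=
  (Word.equiv g).chain_ne

theorem wordOf_inv_s9 (g : CoprodI N) :
    wordOf g⁻¹ = ((wordOf g).map fun x => (⟨x.1, x.2⁻¹⟩ : Σ k, N k)).reverse := by
  have hprod : wordProd (((wordOf g).map fun x => (⟨x.1, x.2⁻¹⟩ : Σ k, N k)).reverse) = g⁻¹ := by
    conv_rhs => rw [← wordProd_wordOf g]
    simp only [wordProd, map_reverse, map_map, prod_inv_reverse]
    rfl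
  rw [← hprod, wordOf_wordProd]
  · intro x hx
    obtain ⟨y, hy, rfl⟩ := mem_map.1 (mem_reverse.1 hx)
    exact inv_ne_one.2 (wordOf_ne_one g y hy)
  · rw [isChain_reverse, isChain_map]
    exact (isChain_wordOf g).imp fun _ _ h => Ne.symm h

theorem length_wordOf_inv (g : CoprodI N) : (wordOf g⁻¹).length = (wordOf g).length := by
  rw [wordOf_inv_s9, length_reverse, length_map]

theorem wordOf_pow {g : CoprodI N} (hlen : 2 ≤ (wordOf g).length)
    (hcyc : CyclicallyReduced (wordOf g)) (n : ℕ) :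
    wordOf (g ^ n) = (replicate n (wordOf g)).flatten := by
  have hw : wordOf g ≠ [] := ne_nil_of_length_pos (by omega)
  have hprod : wordProd (replicate n (wordOf g)).flatten = g ^ n := by
    simp only [wordProd, map_flatten, prod_flatten, map_replicate, prod_replicate]
    rw [← wordProd, wordProd_wordOf]
  rw [← hprod, wordOf_wordProd]
  · simpa using fun x _ hx => wordOf_ne_one g x hx
  · rw [isChain_flatten (by simp [hw])]
    refine ⟨by simpa using fun _ => isChain_wordOf g, isChain_replicate_of_rel _ ?_⟩
    exact fun x hx y hy => (hcyc hlen y hy x hx).symm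

theorem brooks_pow {g : CoprodI N} (hlen : 2 ≤ (wordOf g).length)
    (hcyc : CyclicallyReduced (wordOf g)) (hso : ¬ SelfOverlapping (wordOf g))
    (hconj : ¬ IsConj g g⁻¹) (n : ℕ) : brooks g (g ^ n) = n := by
  have hw : wordOf g ≠ [] := ne_nil_of_length_pos (by omega)
  have hinv : ¬ wordOf g ~r wordOf g⁻¹ := fun h =>
    hconj (by simpa only [wordProd_wordOf] using h.isConj_wordProd)
  rw [brooks, wordOf_pow hlen hcyc, countOcc_flatten_replicate hw hso,
    countOcc_flatten_replicate_eq_zero (length_wordOf_inv g) hinv, Nat.cast_zero, sub_zero]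

end FreeProduct

/-- If `g` is cyclically reduced of length at least two, not self-overlapping, and not
conjugate to its inverse, then the homogenized Brooks quasimorphism satisfies `φ̄_g(g) = 1`. -/
theorem brooks_homogenization_eq_one (g : CoprodI M)
    (hlen : 2 ≤ (wordOf g).length)
    (hcyc : CyclicallyReduced (wordOf g))
    (hso : ¬ SelfOverlapping (wordOf g))
    (hconj : ¬ IsConj g g⁻¹) :
    Filter.Tendsto (fun n : ℕ => (brooks g (g ^ n) : ℝ) / (n : ℝ))
      Filter.atTop (nhds 1) := by
  refine tendsto_const_nhds.congr' ?_
  filter_upwards [Filter.eventually_ne_atTop 0] with n hn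
  rw [brooks_pow hlen hcyc hso hconj, Int.cast_natCast, div_self (Nat.cast_ne_zero.2 hn)]
end

section
/- Let G = (ℤ/2) ⋆ (ℤ/3) with generators a of order 2 and b of order 3. Then scl_G(ab) = 1/12. -/
/-!
Upper bound: since `a² = b³ = 1`, `(ab)⁶` is conjugate to a single commutator, and by Culler's
identity `[x, y]^(2k+1)` is a product of `k + 1` commutators, so `cl((ab)^(6(2k+1))) ≤ k + 1`.

Lower bound (Bavard duality, one direction): counting the letters `b` minus the letters `b⁻¹` in
the reduced word of an element is a quasimorphism of defect `3` on `ℤ/2 ⋆ ℤ/3`. Its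
antisymmetrization `ψ` has defect `6`, so `ψ ≤ 24 m` on products of `m` commutators, whereas
`ψ((ab)ⁿ) = 2n`. Hence `cl((ab)ⁿ) ≥ n / 12`.
-/

open Monoid
open scoped ENNReal
open scoped commutatorElement

variable {G : Type*} [Group G]

/-- The set of `n` such that `g` is a product of `n` commutators. -/
def clSet (g : G) : Set ℕ :=
  {n | ∃ f : Fin n → G × G, g = (List.ofFn fun i => ⁅(f i).1, (f i).2⁆).prod}

/-- Commutator length, valued in `ℝ≥0∞`; it is `⊤` if `g` is not a product of commutators. -/
noncomputable def clE (g : G) : ℝ≥0∞ :=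
  sInf ((fun n : ℕ => (n : ℝ≥0∞)) '' clSet g)

/-- Stable commutator length `scl_G(g) = lim_n cl(g^n)/n`, equivalently the infimum of
`cl(g^n)/n`. -/
noncomputable def sclE (g : G) : ℝ≥0∞ :=
  ⨅ n : ℕ+, clE (g ^ (n : ℕ)) / ((n : ℕ) : ℝ≥0∞)

open Filter Topology

section CommutatorLength

variable {H : Type*} [Group H] {g h : G} {m n : ℕ}

lemma clSet_mul (hg : m ∈ clSet g) (hh : n ∈ clSet h) : m + n ∈ clSet (g * h) := by
  obtain ⟨f₁, rfl⟩ := hg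
  obtain ⟨f₂, rfl⟩ := hh
  refine ⟨Fin.append f₁ f₂, ?_⟩
  rw [List.ofFn_add]
  simp only [Fin.append_left', Fin.append_right, List.prod_append]

lemma clSet_map (f : G →* H) (hg : n ∈ clSet g) : n ∈ clSet (f g) := by
  obtain ⟨c, rfl⟩ := hg
  refine ⟨fun i => (f (c i).1, f (c i).2), ?_⟩
  simp [map_list_prod, List.map_ofFn, Function.comp_def, map_commutatorElement]

lemma clSet_conj (t : G) (hg : n ∈ clSet g) : n ∈ clSet (t * g * t⁻¹) :=
  clSet_map (MulAut.conj t).toMonoidHom hg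

lemma one_mem_clSet_commutatorElement (x y : G) : 1 ∈ clSet ⁅x, y⁆ :=
  ⟨fun _ => (x, y), by simp⟩

lemma succ_mem_clSet_conj_commutatorElement_mul (t x y : G) (hg : n ∈ clSet g) :
    n + 1 ∈ clSet (t * ⁅x, y⁆ * t⁻¹ * g) :=
  add_comm 1 n ▸ clSet_mul (clSet_conj t (one_mem_clSet_commutatorElement x y)) hg

lemma sclE_le_div (hn : 0 < n) (h : m ∈ clSet (g ^ n)) : sclE g ≤ m / n :=
  (iInf_le (fun k : ℕ+ => clE (g ^ (k : ℕ)) / ((k : ℕ) : ℝ≥0∞)) (⟨n, hn⟩ : ℕ+)).trans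
    (ENNReal.div_le_div_right (sInf_le (Set.mem_image_of_mem _ h)) _)

lemma sclE_le_ofReal_of_tendsto {n m : ℕ → ℕ} (hn : ∀ k, 0 < n k)
    (hm : ∀ k, m k ∈ clSet (g ^ n k)) {L : ℝ}
    (hL : Tendsto (fun k => (m k : ℝ) / n k) atTop (𝓝 L)) : sclE g ≤ ENNReal.ofReal L := by
  refine ge_of_tendsto' (ENNReal.tendsto_ofReal hL) fun k => ?_
  rw [ENNReal.ofReal_div_of_pos (by exact_mod_cast hn k), ENNReal.ofReal_natCast,
    ENNReal.ofReal_natCast]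
  exact sclE_le_div (hn k) (hm k)

lemma inv_le_sclE {c : ℕ} (h : ∀ n m, m ∈ clSet (g ^ n) → n ≤ c * m) :
    (c : ℝ≥0∞)⁻¹ ≤ sclE g := by
  refine le_iInf fun n => ?_
  rw [ENNReal.le_div_iff_mul_le (.inl (by simp)) (.inl (by simp))]
  refine le_sInf ?_
  rintro _ ⟨m, hm, rfl⟩
  rw [mul_comm, ← div_eq_mul_inv]
  refine ENNReal.div_le_of_le_mul ?_
  change ((n : ℕ) : ℝ≥0∞) ≤ m * c
  exact_mod_cast (mul_comm c m) ▸ h n m hm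

end CommutatorLength

section Culler

-- The induction replaces `(x, y)` by `(y⁻¹, x)`: `⁅y⁻¹, x⁆` is conjugate to `⁅x, y⁆`.
lemma mem_clSet_conj_commutatorElement_mul_pow (j : ℕ) (x y : G) :
    j + 1 ∈ clSet (y⁻¹ * ⁅x, y ^ 2⁆ * y * ⁅x, y⁆ ^ (2 * j)) := by
  induction j generalizing x y with
  | zero => simpa using clSet_conj y⁻¹ (one_mem_clSet_commutatorElement x (y ^ 2))
  | succ j ih =>
    have hconj : ⁅y⁻¹, x⁆ ^ (2 * j) = y⁻¹ * ⁅x, y⁆ ^ (2 * j) * y⁻¹⁻¹ := by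
      rw [← conj_pow]
      simp only [commutatorElement_def]
      group
    have key : y⁻¹ * ⁅x, y ^ 2⁆ * y * ⁅x, y⁆ ^ (2 * (j + 1)) =
        y⁻¹ * ⁅x, y * y * x⁻¹ * y⁻¹ * x * y * x⁻¹⁆ * y⁻¹⁻¹ *
          (y * (x⁻¹ * ⁅y⁻¹, x ^ 2⁆ * x * ⁅y⁻¹, x⁆ ^ (2 * j)) * y⁻¹) := by
      rw [hconj, show 2 * (j + 1) = 2 + 2 * j by ring, pow_add]
      generalize ⁅x, y⁆ ^ (2 * j) = T
      simp only [commutatorElement_def, pow_succ, pow_zero, one_mul]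
      group
    rw [key]
    exact succ_mem_clSet_conj_commutatorElement_mul _ _ _ (clSet_conj y (ih y⁻¹ x))

theorem mem_clSet_commutatorElement_pow (k : ℕ) (x y : G) :
    k + 1 ∈ clSet (⁅x, y⁆ ^ (2 * k + 1)) := by
  cases k with
  | zero => simpa using one_mem_clSet_commutatorElement x y
  | succ k =>
    have key : ⁅x, y⁆ ^ (2 * (k + 1) + 1) =
        x * ⁅y, x⁻¹ * (y⁻¹ * x * y * x⁻¹) * y⁻¹⁆ * x⁻¹ *
          (y⁻¹ * ⁅x, y ^ 2⁆ * y * ⁅x, y⁆ ^ (2 * k)) := by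
      rw [show 2 * (k + 1) + 1 = 3 + 2 * k by ring, pow_add]
      generalize ⁅x, y⁆ ^ (2 * k) = T
      simp only [commutatorElement_def, pow_succ, pow_zero, one_mul]
      group
    rw [key]
    exact succ_mem_clSet_conj_commutatorElement_mul _ _ _
      (mem_clSet_conj_commutatorElement_mul_pow k x y)

end Culler

lemma pow_six_eq_conj_commutatorElement {a b : G} (ha : a ^ 2 = 1) (hb : b ^ 3 = 1) :
    (a * b) ^ 6 =
      (a * b * b)⁻¹ * ⁅a * b * b * a * b, a * b * a * b * b⁆ * (a * b * b)⁻¹⁻¹ := by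
  have ha' : a⁻¹ = a := inv_eq_of_mul_eq_one_right (by rw [← pow_two, ha])
  have hb' : b⁻¹ = b * b := inv_eq_of_mul_eq_one_right (by rw [← pow_three, hb])
  have ha₂ (z : G) : a * (a * z) = z := by rw [← mul_assoc, ← pow_two, ha, one_mul]
  have hb₃ (z : G) : b * (b * (b * z)) = z := by
    rw [← mul_assoc, ← mul_assoc, ← pow_three', hb, one_mul]
  simp only [commutatorElement_def, mul_inv_rev, ha', hb', pow_succ, pow_zero, one_mul,
    mul_assoc, ha₂, hb₃]

def IsQuasimorphism (φ : G → ℤ) (D : ℤ) : Prop :=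
  ∀ g h, |φ (g * h) - φ g - φ h| ≤ D

namespace IsQuasimorphism

variable {φ : G → ℤ} {D : ℤ}

lemma sub_apply_inv (hφ : IsQuasimorphism φ D) :
    IsQuasimorphism (fun g => φ g - φ g⁻¹) (2 * D) := by
  intro g h
  have h₁ := abs_le.mp (hφ g h)
  have h₂ := abs_le.mp (hφ h⁻¹ g⁻¹)
  simp only [mul_inv_rev]
  rw [abs_le]
  constructor <;> linarith [h₁.1, h₁.2, h₂.1, h₂.2]

lemma apply_commutatorElement_le (hφ : IsQuasimorphism φ D) (hinv : ∀ g, φ g⁻¹ = -φ g)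
    (x y : G) : φ ⁅x, y⁆ ≤ 3 * D := by
  have h₁ := abs_le.mp (hφ (x * y * x⁻¹) y⁻¹)
  have h₂ := abs_le.mp (hφ (x * y) x⁻¹)
  have h₃ := abs_le.mp (hφ x y)
  rw [hinv] at h₁ h₂
  rw [commutatorElement_def]
  linarith

lemma apply_list_prod_le (hφ : IsQuasimorphism φ D) (hinv : ∀ g, φ g⁻¹ = -φ g) {C : ℤ}
    (l : List G) (hl : ∀ c ∈ l, φ c ≤ C) : φ l.prod ≤ (C + D) * l.length := by
  induction l with
  | nil =>
    have : φ 1 = -φ 1 := by simpa using hinv 1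
    simp only [List.prod_nil, List.length_nil, Nat.cast_zero, mul_zero]
    linarith
  | cons c l ih =>
    have hc := hl c List.mem_cons_self
    have hrest := ih fun c' hc' => hl c' (List.mem_cons_of_mem c hc')
    have := (abs_le.mp (hφ c l.prod)).2
    simp only [List.prod_cons, List.length_cons]
    push_cast
    linarith

lemma le_of_mem_clSet (hφ : IsQuasimorphism φ D) (hinv : ∀ g, φ g⁻¹ = -φ g) {g : G} {m : ℕ}
    (h : m ∈ clSet g) : φ g ≤ 4 * D * m := by
  obtain ⟨f, rfl⟩ := h
  have := hφ.apply_list_prod_le hinv _ fun c hc => by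
    obtain ⟨i, rfl⟩ := List.mem_ofFn.mp hc
    exact hφ.apply_commutatorElement_le hinv (f i).1 (f i).2
  simp only [List.length_ofFn] at this
  linarith

end IsQuasimorphism

def zmodPowHom {M : Type*} [Monoid M] (n : ℕ) [NeZero n] (m : M) (h : m ^ n = 1) :
    Multiplicative (ZMod n) →* M where
  toFun u := m ^ u.toAdd.val
  map_one' := by simp
  map_mul' u v := by
    have pow_mod (k : ℕ) : m ^ (k % n) = m ^ k := by
      conv_rhs => rw [← Nat.div_add_mod k n, pow_add, pow_mul, h, one_pow, one_mul]
    rw [toAdd_mul, ZMod.val_add, pow_mod, pow_add]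

abbrev Z2Z3 := Coprod (Multiplicative (ZMod 2)) (Multiplicative (ZMod 3))

namespace Z2Z3

-- `b'` stands for `b⁻¹ = b²`.
inductive Letter
  | a
  | b
  | b'

namespace Letter

def isB : Letter → Bool
  | a => false
  | _ => true

def inv : Letter → Letter
  | a => a
  | b => b'
  | b' => b

def weight : Letter → ℤ
  | a => 0
  | b => 1
  | b' => -1

def toZ2Z3 : Letter → Z2Z3
  | a => Coprod.inl (.ofAdd 1)
  | b => Coprod.inr (.ofAdd 1)
  | b' => Coprod.inr (.ofAdd 2)

def act : Letter → List Letter → List Letter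
  | a, a :: w => w
  | b, b :: w => b' :: w
  | b, b' :: w => w
  | b', b :: w => w
  | b', b' :: w => b :: w
  | x, w => x :: w

lemma isB_inv (x : Letter) : x.inv.isB = x.isB := by cases x <;> rfl

lemma weight_inv (x : Letter) : x.inv.weight = -x.weight := by cases x <;> rfl

lemma abs_weight_le_one (x : Letter) : |x.weight| ≤ 1 := by cases x <;> simp [weight]

lemma act_cons_of_isB_ne {x y : Letter} (hxy : x.isB ≠ y.isB) (w : List Letter) :
    act x (y :: w) = x :: y :: w := by
  cases x <;> cases y <;> first | rfl | exact absurd rfl hxy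

lemma toZ2Z3_inv (x : Letter) : x.inv.toZ2Z3 = x.toZ2Z3⁻¹ := by
  cases x
  · exact (congrArg Coprod.inl (by decide)).trans (map_inv _ _)
  · exact (congrArg Coprod.inr (by decide)).trans (map_inv _ _)
  · exact (congrArg Coprod.inr (by decide)).trans (map_inv _ _)

lemma toZ2Z3_a_pow_two : a.toZ2Z3 ^ 2 = 1 := by
  rw [toZ2Z3, ← map_pow]
  exact (congrArg Coprod.inl (by decide)).trans (map_one _)

lemma toZ2Z3_b_pow_three : b.toZ2Z3 ^ 3 = 1 := by
  rw [toZ2Z3, ← map_pow]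
  exact (congrArg Coprod.inr (by decide)).trans (map_one _)

end Letter

open Letter

def Reduced (w : List Letter) : Prop := w.IsChain fun x y => x.isB ≠ y.isB

lemma reduced_iff_map_isB {w : List Letter} : Reduced w ↔ (w.map isB).IsChain (· ≠ ·) :=
  (List.isChain_map isB).symm

lemma reduced_append_cons_inv {t s : List Letter} {x : Letter} (hx : Reduced (t ++ [x]))
    (hs : Reduced (x :: s)) : Reduced (t ++ x.inv :: s) := by
  rw [reduced_iff_map_isB] at *
  have := List.IsChain.append_overlap (l₁ := t.map isB) (l₂ := [x.isB]) (l₃ := s.map isB)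
    (by simpa using hx) (by simpa using hs) (by simp)
  simpa [isB_inv] using this

section ActOnReduced

variable {w : List Letter} (hw : Reduced w)
include hw

lemma reduced_act (x : Letter) : Reduced (act x w) := by
  rcases w with _ | ⟨y, _ | ⟨z, w⟩⟩ <;> cases x <;> (try cases y) <;> (try cases z) <;>
    simp_all [act, Reduced, isB]

lemma act_inv_act (x : Letter) : act x.inv (act x w) = w := by
  rcases w with _ | ⟨y, _ | ⟨z, w⟩⟩ <;> cases x <;> (try cases y) <;> (try cases z) <;>
    simp_all [act, Reduced, isB, inv]

lemma act_b_act_b : act b (act b w) = act b' w := by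
  rcases w with _ | ⟨y, _ | ⟨z, w⟩⟩ <;> (try cases y) <;> (try cases z) <;>
    simp_all [act, Reduced, isB]

lemma act_b'_act_b' : act b' (act b' w) = act b w := by
  rcases w with _ | ⟨y, _ | ⟨z, w⟩⟩ <;> (try cases y) <;> (try cases z) <;>
    simp_all [act, Reduced, isB]

lemma act_cases (x : Letter) :
    Reduced (x :: w) ∨ (∃ s, w = x.inv :: s ∧ act x w = s) ∨
      (∃ s, w = x :: s ∧ act x w = x.inv :: s) := by
  rcases w with _ | ⟨y, w⟩ <;> cases x <;> (try cases y) <;>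
    simp_all [act, Reduced, isB, inv]

end ActOnReduced

lemma act_eq_cons {x : Letter} {w : List Letter} (h : Reduced (x :: w)) : act x w = x :: w := by
  rcases w with _ | ⟨y, w⟩ <;> cases x <;> (try cases y) <;> simp_all [act, Reduced, isB]

def ReducedWord : Type := {w : List Letter // Reduced w}

def ReducedWord.nil : ReducedWord := ⟨[], List.isChain_nil⟩

def Letter.toEnd (x : Letter) : Function.End ReducedWord :=
  fun w => ⟨act x w.1, reduced_act w.2 x⟩

lemma toEnd_a_pow_two : a.toEnd ^ 2 = 1 := by
  funext w
  exact Subtype.ext (act_inv_act w.2 a)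

lemma toEnd_b_pow_three : b.toEnd ^ 3 = 1 := by
  funext w
  refine Subtype.ext ?_
  change act b (act b (act b w.1)) = w.1
  rw [act_b_act_b (reduced_act w.2 b)]
  exact act_inv_act w.2 b

-- van der Waerden's trick: normal forms come from this action, so their uniqueness is not needed.
def wordAction : Z2Z3 →* Function.End ReducedWord :=
  Coprod.lift (zmodPowHom 2 a.toEnd toEnd_a_pow_two) (zmodPowHom 3 b.toEnd toEnd_b_pow_three)

lemma wordAction_toZ2Z3 (x : Letter) : wordAction x.toZ2Z3 = x.toEnd := by
  cases x
  · rfl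
  · rfl
  · funext w
    exact Subtype.ext (act_b_act_b w.2)

lemma wordAction_mul_apply (g h : Z2Z3) (v : ReducedWord) :
    wordAction (g * h) v = wordAction g (wordAction h v) := by
  rw [map_mul]
  rfl

def normalForm (g : Z2Z3) : List Letter := (wordAction g .nil).1

lemma reduced_normalForm (g : Z2Z3) : Reduced (normalForm g) := (wordAction g .nil).2

lemma normalForm_toZ2Z3_mul (x : Letter) (g : Z2Z3) :
    normalForm (x.toZ2Z3 * g) = act x (normalForm g) := by
  rw [normalForm, wordAction_mul_apply, wordAction_toZ2Z3]
  rfl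

def mulWord (t v : List Letter) : List Letter := t.foldr act v

lemma mulWord_append_singleton (t : List Letter) (x : Letter) (v : List Letter) :
    mulWord (t ++ [x]) v = mulWord t (act x v) :=
  List.foldr_append

lemma reduced_mulWord (t : List Letter) {v : List Letter} (hv : Reduced v) :
    Reduced (mulWord t v) := by
  induction t with
  | nil => exact hv
  | cons x t ih => exact reduced_act ih x

lemma mulWord_eq_append {t v : List Letter} (h : Reduced (t ++ v)) : mulWord t v = t ++ v := by
  induction t with
  | nil => rfl
  | cons x t ih =>
    rw [List.cons_append] at h
    exact (congrArg (act x) (ih h.tail)).trans (act_eq_cons h)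

lemma mulWord_act (x : Letter) (w : List Letter) {v : List Letter} (hv : Reduced v) :
    mulWord (act x w) v = act x (mulWord w v) := by
  rcases w with _ | ⟨y, w⟩
  · cases x <;> rfl
  have hwv : Reduced (mulWord w v) := reduced_mulWord w hv
  cases x <;> cases y <;>
    first
    | rfl
    | exact (act_inv_act hwv a).symm
    | exact (act_inv_act hwv b).symm
    | exact (act_inv_act hwv b').symm
    | exact (act_b_act_b hwv).symm
    | exact (act_b'_act_b' hwv).symm

lemma mulWord_assoc (t s : List Letter) {v : List Letter} (hv : Reduced v) :
    mulWord (mulWord t s) v = mulWord t (mulWord s v) := by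
  induction t with
  | nil => rfl
  | cons x t ih => exact (mulWord_act x _ hv).trans (congrArg (act x) ih)

lemma inl_eq_one_or_toZ2Z3 (m : Multiplicative (ZMod 2)) :
    (Coprod.inl m : Z2Z3) = 1 ∨ ∃ x : Letter, Coprod.inl m = x.toZ2Z3 := by
  obtain rfl | rfl := (by decide : ∀ m : Multiplicative (ZMod 2), m = 1 ∨ m = .ofAdd 1) m
  · exact .inl (map_one _)
  · exact .inr ⟨a, rfl⟩

lemma inr_eq_one_or_toZ2Z3 (m : Multiplicative (ZMod 3)) :
    (Coprod.inr m : Z2Z3) = 1 ∨ ∃ x : Letter, Coprod.inr m = x.toZ2Z3 := by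
  obtain rfl | rfl | rfl :=
    (by decide : ∀ m : Multiplicative (ZMod 3), m = 1 ∨ m = .ofAdd 1 ∨ m = .ofAdd 2) m
  · exact .inl (map_one _)
  · exact .inr ⟨b, rfl⟩
  · exact .inr ⟨b', rfl⟩

lemma wordAction_apply (g : Z2Z3) (v : ReducedWord) :
    (wordAction g v).1 = mulWord (normalForm g) v.1 := by
  have of_one_or_toZ2Z3 (g : Z2Z3) (hg : g = 1 ∨ ∃ x : Letter, g = x.toZ2Z3) (v : ReducedWord) :
      (wordAction g v).1 = mulWord (normalForm g) v.1 := by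
    obtain rfl | ⟨x, rfl⟩ := hg
    · rfl
    · simp only [normalForm, wordAction_toZ2Z3]
      cases x <;> rfl
  induction g using Coprod.induction_on generalizing v with
  | inl m => exact of_one_or_toZ2Z3 _ (inl_eq_one_or_toZ2Z3 m) v
  | inr m => exact of_one_or_toZ2Z3 _ (inr_eq_one_or_toZ2Z3 m) v
  | mul g h ihg ihh =>
    have hgh : normalForm (g * h) = mulWord (normalForm g) (normalForm h) := by
      rw [normalForm, wordAction_mul_apply]
      exact ihg _
    rw [hgh, mulWord_assoc _ _ v.2, ← ihh, ← ihg, wordAction_mul_apply]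

lemma normalForm_mul (g h : Z2Z3) :
    normalForm (g * h) = mulWord (normalForm g) (normalForm h) := by
  rw [normalForm, wordAction_mul_apply]
  exact wordAction_apply g _

lemma normalForm_pow {x y : Letter} (hxy : x.isB ≠ y.isB) (n : ℕ) :
    normalForm ((x.toZ2Z3 * y.toZ2Z3) ^ n) = (List.replicate n [x, y]).flatten := by
  induction n with
  | zero => rfl
  | succ n ih =>
    rw [pow_succ', mul_assoc, normalForm_toZ2Z3_mul, normalForm_toZ2Z3_mul, ih]
    have hy : act y (List.replicate n [x, y]).flatten = y :: (List.replicate n [x, y]).flatten := by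
      cases n with
      | zero => cases y <;> rfl
      | succ n => exact act_cons_of_isB_ne hxy.symm _
    rw [hy, act_cons_of_isB_ne hxy]
    rfl

def wordWeight (w : List Letter) : ℤ := (w.map weight).sum

@[simp] lemma wordWeight_nil : wordWeight [] = 0 := rfl

@[simp] lemma wordWeight_cons (x : Letter) (w : List Letter) :
    wordWeight (x :: w) = x.weight + wordWeight w := by
  simp [wordWeight]

@[simp] lemma wordWeight_append (t w : List Letter) :
    wordWeight (t ++ w) = wordWeight t + wordWeight w := by
  simp [wordWeight]

-- Multiplying `t` by `v` cancels pairs of letters of total weight `0` and then merges at most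
-- one pair `b b` or `b' b'` into a single letter, changing the weight by `∓3`.
lemma abs_wordWeight_mulWord_sub_le {t v : List Letter} (ht : Reduced t) (hv : Reduced v) :
    |wordWeight (mulWord t v) - wordWeight t - wordWeight v| ≤ 3 := by
  induction t using List.reverseRecOn generalizing v with
  | nil => simp [mulWord]
  | append_singleton t x ih =>
    have ht' : Reduced t := (List.isChain_append.mp ht).1
    rw [mulWord_append_singleton, wordWeight_append, wordWeight_cons, wordWeight_nil]
    rcases act_cases hv x with hxv | ⟨s, rfl, hact⟩ | ⟨s, rfl, hact⟩
    · have := ih ht' hxv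
      rw [act_eq_cons hxv]
      rw [wordWeight_cons] at this
      convert this using 2
      ring
    · have := ih ht' (v := s) hv.tail
      rw [hact]
      rw [wordWeight_cons, weight_inv]
      convert this using 2
      ring
    · rw [hact, mulWord_eq_append (reduced_append_cons_inv ht hv)]
      simp only [wordWeight_cons, wordWeight_append, weight_inv]
      have := abs_le.mp x.abs_weight_le_one
      rw [abs_le]
      constructor <;> linarith [this.1, this.2]

lemma wordWeight_normalForm_pow {x y : Letter} (hxy : x.isB ≠ y.isB) (n : ℕ) :
    wordWeight (normalForm ((x.toZ2Z3 * y.toZ2Z3) ^ n)) = n * (x.weight + y.weight) := by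
  rw [normalForm_pow hxy]
  induction n with
  | zero => simp
  | succ n ih =>
    rw [List.replicate_succ, List.flatten_cons, wordWeight_append, ih]
    simp only [wordWeight_cons, wordWeight_nil]
    push_cast
    ring

def bBalance (g : Z2Z3) : ℤ := wordWeight (normalForm g)

lemma isQuasimorphism_bBalance : IsQuasimorphism bBalance 3 := by
  intro g h
  rw [bBalance, normalForm_mul]
  exact abs_wordWeight_mulWord_sub_le (reduced_normalForm g) (reduced_normalForm h)

lemma bBalance_ab_pow (n : ℕ) : bBalance ((a.toZ2Z3 * b.toZ2Z3) ^ n) = n := by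
  simpa [bBalance, weight] using wordWeight_normalForm_pow (x := a) (y := b) (by decide) n

lemma bBalance_ab_pow_inv (n : ℕ) : bBalance ((a.toZ2Z3 * b.toZ2Z3) ^ n)⁻¹ = -n := by
  have hinv : (a.toZ2Z3 * b.toZ2Z3)⁻¹ = b'.toZ2Z3 * a.toZ2Z3 := by
    rw [mul_inv_rev, ← toZ2Z3_inv, ← toZ2Z3_inv]
    rfl
  rw [← inv_pow, hinv]
  simpa [bBalance, weight] using wordWeight_normalForm_pow (x := b') (y := a) (by decide) n

lemma le_twelve_mul_of_mem_clSet_ab_pow {n m : ℕ}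
    (h : m ∈ clSet ((a.toZ2Z3 * b.toZ2Z3) ^ n)) : n ≤ 12 * m := by
  have := isQuasimorphism_bBalance.sub_apply_inv.le_of_mem_clSet
    (fun g => by simp only [inv_inv]; ring) h
  simp only [bBalance_ab_pow, bBalance_ab_pow_inv] at this
  omega

lemma mem_clSet_ab_pow (k : ℕ) :
    k + 1 ∈ clSet ((a.toZ2Z3 * b.toZ2Z3) ^ (6 * (2 * k + 1))) := by
  rw [pow_mul, pow_six_eq_conj_commutatorElement toZ2Z3_a_pow_two toZ2Z3_b_pow_three, conj_pow]
  exact clSet_conj _ (mem_clSet_commutatorElement_pow k _ _)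

lemma tendsto_succ_div_six_mul_two_mul_add_one :
    Tendsto (fun k : ℕ => ((k + 1 : ℕ) : ℝ) / (6 * (2 * k + 1) : ℕ)) atTop (𝓝 (1 / 12)) := by
  have h := tendsto_const_nhds (x := (1 / 12 : ℝ)).add <| tendsto_inv_atTop_zero.comp <|
    tendsto_atTop_add_const_right _ 12 <|
      tendsto_natCast_atTop_atTop.const_mul_atTop (by norm_num : (0 : ℝ) < 24)
  rw [add_zero] at h
  refine h.congr fun k => ?_
  simp only [Function.comp_apply]
  push_cast
  field_simp
  ring

lemma sclE_ab_le : sclE (a.toZ2Z3 * b.toZ2Z3) ≤ 1 / 12 :=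
  calc sclE (a.toZ2Z3 * b.toZ2Z3) ≤ ENNReal.ofReal (1 / 12) :=
        sclE_le_ofReal_of_tendsto (fun k => by positivity) mem_clSet_ab_pow
          tendsto_succ_div_six_mul_two_mul_add_one
    _ = 1 / 12 := by rw [ENNReal.ofReal_div_of_pos (by norm_num)]; simp

lemma le_sclE_ab : 1 / 12 ≤ sclE (a.toZ2Z3 * b.toZ2Z3) := by
  rw [one_div]
  exact_mod_cast inv_le_sclE fun n m => le_twelve_mul_of_mem_clSet_ab_pow

end Z2Z3

/-- In `(ℤ/2) ⋆ (ℤ/3)` with generators `a` of order two and `b` of order three,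
`scl(ab) = 1/12`. -/
theorem scl_ab_eq_one_twelfth :
    sclE ((Coprod.inl (Multiplicative.ofAdd (1 : ZMod 2)) :
        Coprod (Multiplicative (ZMod 2)) (Multiplicative (ZMod 3))) *
      Coprod.inr (Multiplicative.ofAdd (1 : ZMod 3))) = 1 / 12 :=
  le_antisymm Z2Z3.sclE_ab_le Z2Z3.le_sclE_ab
end

section
/- Let G be a free product of cyclic groups. If g ∈ G is not conjugate into any free factor, then either scl_G(g) ≥ 1/12 or scl_G(g) = 0, and the latter occurs exactly when g is conjugate to g^{-1}. -/
open Monoid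
open scoped ENNReal
open scoped commutatorElement

/-!
Up to conjugacy, `g = y ^ k` where `y` is the product of a cyclically reduced word `w` without
borders: a suitable rotation of the primitive root of the cyclic reduction of `g`, which is not a
single letter since `g` is not conjugate into a factor. Brooks' counting quasimorphism `φ`
(occurrences of `w` minus occurrences of `w⁻¹` in reduced words) satisfies
`φ (u * v) ≤ φ u + φ v + 3` because occurrences of `w` cannot overlap; hence `φ ≤ 9` on
commutators and `φ ≤ 12 m` on products of `m` commutators. If `g` is not conjugate to `g⁻¹`, then
`w⁻¹` never occurs in a power of `w`, so `φ (y ^ N) ≥ N`. Commutator length is invariant under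
conjugation, so if `g ^ n = y ^ (k n)` is a product of `m` commutators then `n ≤ 12 m`, i.e.
`scl g ≥ 1/12`. If instead `c * g * c⁻¹ = g⁻¹`, then `g ^ (2 n) = ⁅g ^ n, c⁆` and `scl g = 0`.
-/

namespace List

variable {α : Type*}

theorem flatten_replicate_add (m n : ℕ) (w : List α) :
    (replicate (m + n) w).flatten = (replicate m w).flatten ++ (replicate n w).flatten := by
  rw [replicate_add, flatten_append]

theorem flatten_replicate_mul (m n : ℕ) (w : List α) :
    (replicate m (replicate n w).flatten).flatten = (replicate (m * n) w).flatten := by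
  induction m with
  | zero => simp
  | succ m ih => rw [replicate_succ, flatten_cons, ih, Nat.succ_mul, Nat.add_comm,
      flatten_replicate_add]

theorem append_flatten_replicate_append (x y : List α) (n : ℕ) :
    x ++ (replicate n (y ++ x)).flatten = (replicate n (x ++ y)).flatten ++ x := by
  induction n with
  | zero => simp
  | succ n ih => simp [replicate_succ, ← ih]

theorem flatten_replicate_rotate_one (n : ℕ) (z : List α) :
    (replicate n z).flatten.rotate 1 = (replicate n (z.rotate 1)).flatten := by
  rcases n with _ | n
  · simp
  rcases z with _ | ⟨a, t⟩
  · simp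
  have h := append_flatten_replicate_append t [a] n
  simp only [replicate_succ, flatten_cons, cons_append, rotate_cons_succ, rotate_zero]
  simp only [cons_append, nil_append] at h
  rw [h, append_assoc, ← flatten_concat, ← replicate_succ', replicate_succ,
    flatten_cons]

theorem flatten_replicate_rotate (n k : ℕ) (z : List α) :
    (replicate n z).flatten.rotate k = (replicate n (z.rotate k)).flatten := by
  induction k with
  | zero => simp
  | succ k ih => rw [← rotate_rotate, ih, flatten_replicate_rotate_one, rotate_rotate]

theorem exists_flatten_replicate_of_append_comm {x y : List α} (h : x ++ y = y ++ x) :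
    ∃ z i j, (replicate i z).flatten = x ∧ (replicate j z).flatten = y := by
  rcases lt_or_ge y.length x.length with hlt | hle
  · obtain ⟨z, i, j, hy, hx⟩ := exists_flatten_replicate_of_append_comm h.symm
    exact ⟨z, j, i, hx, hy⟩
  obtain rfl | hx := eq_or_ne x []
  · exact ⟨y, 0, 1, by simp, by simp⟩
  obtain ⟨y', hy⟩ : x <+: y :=
    prefix_of_prefix_length_le (prefix_append x y) (h ▸ prefix_append y x) hle
  have h' : x ++ y' = y' ++ x := by subst hy; simpa using h
  obtain ⟨z, i, j, rfl, rfl⟩ := exists_flatten_replicate_of_append_comm h'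
  exact ⟨z, i, i + j, rfl, by rw [← hy, flatten_replicate_add]⟩
termination_by 2 * (x.length + y.length) + if y.length < x.length then 1 else 0
decreasing_by
  · split_ifs <;> omega
  · have := length_pos_iff.2 hx
    rw [← hy, length_append]
    split_ifs <;> omega

/-- `[]` is not primitive, being `[] ++ []`. -/
def IsPrimitive (w : List α) : Prop :=
  ∀ z n, (replicate n z).flatten = w → n ≤ 1

theorem IsPrimitive.ne_nil {w : List α} (h : IsPrimitive w) : w ≠ [] := by
  rintro rfl
  simpa using h [] 2 (by simp)

theorem exists_isPrimitive_flatten_replicate {w : List α} (hw : w ≠ []) :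
    ∃ v k, IsPrimitive v ∧ (replicate k v).flatten = w := by
  by_cases hprim : IsPrimitive w
  · exact ⟨w, 1, hprim, by simp⟩
  obtain ⟨z, n, hzn, hn⟩ : ∃ z n, (replicate n z).flatten = w ∧ 1 < n := by
    simpa [IsPrimitive] using hprim
  have hz : z ≠ [] := by rintro rfl; simp at hzn; exact hw hzn
  obtain ⟨v, k, hv, rfl⟩ := exists_isPrimitive_flatten_replicate hz
  exact ⟨v, n * k, hv, by rw [← hzn, flatten_replicate_mul]⟩
termination_by w.length
decreasing_by
  have := length_pos_iff.2 hz
  simp only [← hzn, length_flatten, map_replicate, sum_replicate, smul_eq_mul]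
  nlinarith

theorem IsPrimitive.rotate {w : List α} (h : IsPrimitive w) (k : ℕ) : IsPrimitive (w.rotate k) := by
  intro z n hz
  obtain ⟨m, hm⟩ := (IsRotated.symm ⟨k, rfl⟩ : w.rotate k ~r w)
  exact h (z.rotate m) n (by rw [← flatten_replicate_rotate, hz, hm])

theorem IsPrimitive.rotate_ne_self {w : List α} (h : IsPrimitive w) {d : ℕ} (hd : 0 < d)
    (hdw : d < w.length) : w.rotate d ≠ w := by
  intro hrot
  rw [rotate_eq_drop_append_take hdw.le] at hrot
  obtain ⟨z, i, j, hi, hj⟩ :=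
    exists_flatten_replicate_of_append_comm (hrot.trans (take_append_drop d w).symm)
  have hi0 : i ≠ 0 := by rintro rfl; have := congrArg length hi; simp at this; omega
  have hj0 : j ≠ 0 := by rintro rfl; have := congrArg length hj; simp at this; omega
  have := h z (j + i) (by rw [flatten_replicate_add, hj, hi, take_append_drop])
  omega

def Unbordered (w : List α) : Prop :=
  ∀ b, b <+: w → b <:+ w → b = [] ∨ b = w

theorem append_lt_append_of_lt_of_length_eq [LT α] {u v : List α} (x y : List α) (h : u < v)
    (hl : u.length = v.length) : u ++ x < v ++ y := by
  induction u generalizing v with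
  | nil => cases v <;> simp_all
  | cons a u ih =>
    cases v with
    | nil => simp at hl
    | cons b v =>
      cases h with
      | rel hab => exact Lex.rel hab
      | cons h => exact Lex.cons (ih h (by simpa using hl))

theorem IsPrimitive.exists_unbordered_rotate {w : List α} (h : IsPrimitive w) :
    ∃ k, Unbordered (w.rotate k) := by
  let _ : LinearOrder α := IsWellOrder.linearOrder WellOrderingRel
  have hw := length_pos_iff.2 h.ne_nil
  obtain ⟨k, -, hmin⟩ := Finset.exists_min_image (Finset.range w.length) w.rotate
    ⟨0, Finset.mem_range.2 hw⟩
  refine ⟨k, fun b hpre hsuf => or_iff_not_imp_left.2 fun hb => ?_⟩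
  set L := w.rotate k
  have hL : IsPrimitive L := h.rotate k
  -- A least rotation `L` (a Lyndon word) is unbordered: a border `b` with `L = b ++ u = v ++ b`
  -- gives `b ++ u < b ++ v` and `v ++ b < u ++ b`, which is impossible as `|u| = |v|`.
  have hlt : ∀ d, 0 < d → d < L.length → L < L.rotate d := fun d hd hdL => by
    refine lt_of_le_of_ne ?_ (hL.rotate_ne_self hd hdL).symm
    rw [rotate_rotate, ← rotate_mod]
    exact hmin _ (Finset.mem_range.2 (Nat.mod_lt _ hw))
  by_contra hbL
  obtain ⟨u, hu⟩ := hpre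
  obtain ⟨v, hv⟩ := hsuf
  have hbpos := length_pos_iff.2 hb
  have hlen : u.length = v.length := by
    have h1 := congrArg length hu; have h2 := congrArg length hv; simp at h1 h2; omega
  have hupos : 0 < u.length := length_pos_iff.2 (by rintro rfl; simp_all)
  have h1 : b ++ u < b ++ v := by
    have := hlt v.length (by omega) (by rw [← hv, length_append]; omega)
    rwa [← hv, rotate_append_length_eq, hv, ← hu] at this
  have h2 : v ++ b < u ++ b := by
    have := hlt b.length hbpos (by rw [← hu, length_append]; omega)
    rwa [← hu, rotate_append_length_eq, hu, ← hv] at this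
  rcases lt_trichotomy u v with huv | rfl | hvu
  · exact lt_asymm h2 (append_lt_append_of_lt_of_length_eq b b huv hlen)
  · exact lt_irrefl _ h1
  · exact lt_asymm h1 (append_left_lt hvu)

theorem Unbordered.reverse {w : List α} (h : Unbordered w) : Unbordered w.reverse := by
  intro b hpre hsuf
  rw [← reverse_reverse b, reverse_prefix] at hpre
  rw [← reverse_reverse b, reverse_suffix] at hsuf
  simpa [reverse_eq_iff] using h _ hsuf hpre

theorem Unbordered.map {β : Type*} {f : α → β} (hf : Function.Injective f) {w : List α}
    (h : Unbordered w) : Unbordered (w.map f) := by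
  intro b hpre hsuf
  obtain ⟨b', hb', rfl⟩ := prefix_map_iff.1 hpre
  rcases h b' hb' ((suffix_map_iff_of_injective hf).1 hsuf) with rfl | rfl <;> simp

theorem prefix_drop_iff_exists {w X : List α} (hw : w ≠ []) {i : ℕ} :
    w <+: X.drop i ↔ ∃ p s, p.length = i ∧ p ++ w ++ s = X := by
  constructor
  · rintro ⟨s, hs⟩
    have hi : i ≤ X.length := by
      by_contra! hi
      rw [drop_eq_nil_of_le hi.le] at hs
      exact hw (append_eq_nil_iff.1 hs).1
    exact ⟨X.take i, s, by simpa using hi, by rw [append_assoc, hs, take_append_drop]⟩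
  · rintro ⟨p, s, rfl, rfl⟩
    simp [append_assoc]

section Occurrences

variable [DecidableEq α]

def infixPositions (w X : List α) : Finset ℕ :=
  (Finset.range X.length).filter fun i => w <+: X.drop i

/-- Overlapping occurrences are all counted. -/
def countInfix (w X : List α) : ℕ := (infixPositions w X).card

variable {w X : List α}

theorem mem_infixPositions (hw : w ≠ []) {i : ℕ} : i ∈ infixPositions w X ↔ w <+: X.drop i := by
  simp only [infixPositions, Finset.mem_filter, Finset.mem_range, and_iff_right_iff_imp]
  intro h
  have := h.length_le
  have := length_pos_iff.2 hw
  simp only [length_drop] at *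
  omega

theorem countInfix_reverse (hw : w ≠ []) : countInfix w.reverse X.reverse = countInfix w X := by
  have hw' : w.reverse ≠ [] := by simpa using hw
  refine Finset.card_nbij' (fun i => X.length - w.length - i) (fun i => X.length - w.length - i)
    ?_ ?_ ?_ ?_ <;> intro i hi <;>
    simp only [Finset.mem_coe, mem_infixPositions hw, mem_infixPositions hw',
      prefix_drop_iff_exists hw, prefix_drop_iff_exists hw'] at hi ⊢ <;>
    obtain ⟨p, s, rfl, hX⟩ := hi <;>
    have hlen := congrArg length hX <;>
    simp only [length_append, length_reverse] at hlen
  · exact ⟨s.reverse, p.reverse, by simp; omega, by rw [← reverse_reverse X, ← hX]; simp⟩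
  · exact ⟨s.reverse, p.reverse, by simp; omega, by rw [← hX]; simp⟩
  · omega
  · omega

theorem countInfix_map {β : Type*} [DecidableEq β] {f : α → β} (hf : Function.Injective f) :
    countInfix (w.map f) (X.map f) = countInfix w X := by
  simp only [countInfix, infixPositions, length_map, ← map_drop, prefix_map_iff_of_injective hf]

@[simp] theorem countInfix_nil : countInfix w [] = 0 := rfl

theorem add_length_le_of_mem_infixPositions {i : ℕ} (h : i ∈ infixPositions w X) :
    i + w.length ≤ X.length := by
  simp only [infixPositions, Finset.mem_filter, Finset.mem_range] at h
  have := h.2.length_le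
  simp only [length_drop] at this
  omega

theorem mem_infixPositions_append_left (hw : w ≠ []) {P : List α} (R : List α) {i : ℕ}
    (h : i + w.length ≤ P.length) : i ∈ infixPositions w (P ++ R) ↔ i ∈ infixPositions w P := by
  rw [mem_infixPositions hw, mem_infixPositions hw, drop_append_of_le_length (by omega)]
  exact ⟨fun h' => prefix_of_prefix_length_le h' (prefix_append _ _) (by simp; omega),
    fun h' => h'.trans (prefix_append _ _)⟩

theorem length_add_mem_infixPositions_append (hw : w ≠ []) (P R : List α) {j : ℕ} :
    P.length + j ∈ infixPositions w (P ++ R) ↔ j ∈ infixPositions w R := by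
  rw [mem_infixPositions hw, mem_infixPositions hw, drop_length_add_append]

theorem Unbordered.add_length_le_of_mem_infixPositions (hub : Unbordered w) (hw : w ≠ [])
    {i j : ℕ} (hi : i ∈ infixPositions w X) (hj : j ∈ infixPositions w X) (hij : i < j) :
    i + w.length ≤ j := by
  by_contra! hlt
  rw [mem_infixPositions hw] at hi hj
  obtain ⟨s, hs⟩ := hi
  have hj' : w <+: w.drop (j - i) ++ s := by
    rwa [← drop_append_of_le_length (by omega), hs, drop_drop, Nat.add_sub_cancel' hij.le]
  have hpre : w.drop (j - i) <+: w :=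
    prefix_of_prefix_length_le (prefix_append _ _) hj' (by simp)
  rcases hub _ hpre (drop_suffix _ _) with h | h
  · simp at h; omega
  · have := congrArg length h; simp at this; omega

variable (w) in
theorem countInfix_add_countInfix_le (hw : w ≠ []) (P m S : List α) :
    countInfix w P + countInfix w S ≤ countInfix w (P ++ m ++ S) := by
  let shift := addLeftEmbedding (P ++ m).length
  have hdisj : _root_.Disjoint (infixPositions w P) ((infixPositions w S).map shift) := by
    refine Finset.disjoint_left.2 fun i hi hi' => ?_
    obtain ⟨j, -, rfl⟩ := Finset.mem_map.1 hi'
    have hle := add_length_le_of_mem_infixPositions hi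
    have := length_pos_iff.2 hw
    simp only [shift, addLeftEmbedding_apply, length_append] at hle
    omega
  calc countInfix w P + countInfix w S
      = (infixPositions w P ∪ (infixPositions w S).map shift).card := by
        rw [Finset.card_union_of_disjoint hdisj, Finset.card_map]; rfl
    _ ≤ countInfix w (P ++ m ++ S) := by
        refine Finset.card_le_card (Finset.union_subset (fun i hi => ?_) fun i hi => ?_)
        · rw [append_assoc, mem_infixPositions_append_left hw _
            ((add_length_le_of_mem_infixPositions hi))]
          exact hi
        · obtain ⟨j, hj, rfl⟩ := Finset.mem_map.1 hi
          exact (length_add_mem_infixPositions_append hw _ _).2 hj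

theorem Unbordered.countInfix_append_le (hub : Unbordered w) (hw : w ≠ []) (P S : List α)
    {m : List α} (hm : m.length ≤ 1) :
    countInfix w (P ++ m ++ S) ≤ countInfix w P + countInfix w S + 1 := by
  let shift := addLeftEmbedding (P ++ m).length
  let old := infixPositions w P ∪ (infixPositions w S).map shift
  -- an occurrence not seen in `P` or `S` straddles `m`; two of them would overlap
  have hnew : (infixPositions w (P ++ m ++ S) \ old).card ≤ 1 := by
    refine Finset.card_le_one.2 fun i hi j hj => ?_
    simp only [Finset.mem_sdiff, Finset.mem_union, not_or, old] at hi hj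
    have straddle : ∀ k ∈ infixPositions w (P ++ m ++ S), k ∉ infixPositions w P →
        k ∉ (infixPositions w S).map shift → P.length < k + w.length ∧ k < P.length + m.length := by
      intro k hk hP hS
      constructor
      · by_contra! h
        rw [append_assoc, mem_infixPositions_append_left hw _ h] at hk
        exact hP hk
      · by_contra! h
        obtain ⟨l, rfl⟩ := Nat.exists_eq_add_of_le h
        refine hS (Finset.mem_map.2 ⟨l, ?_, by simp [shift]⟩)
        rw [← length_add_mem_infixPositions_append hw (P ++ m)]
        simpa using hk
    have hi' := straddle i hi.1 hi.2.1 hi.2.2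
    have hj' := straddle j hj.1 hj.2.1 hj.2.2
    by_contra hne
    rcases Nat.lt_or_gt_of_ne hne with h | h
    · have := hub.add_length_le_of_mem_infixPositions hw hi.1 hj.1 h; omega
    · have := hub.add_length_le_of_mem_infixPositions hw hj.1 hi.1 h; omega
  calc countInfix w (P ++ m ++ S)
      ≤ (infixPositions w (P ++ m ++ S) \ old).card + old.card := Finset.card_le_card_sdiff_add_card
    _ ≤ 1 + (countInfix w P + countInfix w S) := by
        gcongr
        exact (Finset.card_union_le _ _).trans (by rw [Finset.card_map]; rfl)
    _ = _ := by ring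

theorem le_countInfix_flatten_replicate (hw : w ≠ []) (n : ℕ) :
    n ≤ countInfix w (replicate n w).flatten := by
  refine Finset.le_card_of_inj_on_range (fun k => (replicate k w).flatten.length) (fun k hk => ?_)
    fun k _ l _ h => Nat.eq_of_mul_eq_mul_right (length_pos_iff.2 hw) (by simpa using h)
  obtain ⟨l, rfl⟩ := Nat.exists_eq_add_of_lt hk
  rw [Nat.add_assoc, flatten_replicate_add, replicate_succ, flatten_cons, ← add_zero (length _),
    length_add_mem_infixPositions_append hw, mem_infixPositions hw, drop_zero]
  exact prefix_append _ _

theorem eq_rotate_of_mem_infixPositions_flatten_replicate {v : List α}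
    (hv : v.length = w.length) {n i : ℕ} (h : i ∈ infixPositions v (replicate n w).flatten) :
    v = w.rotate i := by
  simp only [infixPositions, Finset.mem_filter, Finset.mem_range] at h
  obtain ⟨hi, hpre⟩ := h
  obtain ⟨n, rfl⟩ : ∃ l, n = l + 1 := Nat.exists_eq_succ_of_ne_zero (by rintro rfl; simp at hi)
  have hrot := flatten_replicate_rotate (n + 1) i w
  rw [rotate_eq_drop_append_take hi.le, replicate_succ, flatten_cons] at hrot
  have : v <+: w.rotate i :=
    prefix_of_prefix_length_le (hrot ▸ hpre.trans (prefix_append _ _)) (prefix_append _ _)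
      (by simp [hv])
  exact this.eq_of_length (by simp [hv])

end Occurrences

end List

section StableCommutatorLength

variable {G : Type*} [Group G]

theorem IsConj.inv {a b : G} (h : IsConj a b) : IsConj a⁻¹ b⁻¹ := by
  obtain ⟨c, rfl⟩ := isConj_iff.1 h
  exact isConj_iff.2 ⟨c, conj_inv.symm⟩

theorem IsConj.mem_clSet {a b : G} (h : IsConj a b) {n : ℕ} (hn : n ∈ clSet a) : n ∈ clSet b := by
  obtain ⟨c, rfl⟩ := isConj_iff.1 h
  obtain ⟨F, rfl⟩ := hn
  refine ⟨fun i => (MulAut.conj c (F i).1, MulAut.conj c (F i).2), ?_⟩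
  simp only [← MulAut.conj_apply, map_list_prod, List.map_ofFn, Function.comp_def,
    map_commutatorElement]

theorem clE_le_of_mem_clSet {g : G} {n : ℕ} (h : n ∈ clSet g) : clE g ≤ n :=
  sInf_le ⟨n, h, rfl⟩

theorem sclE_le_div_of_mem_clSet {g : G} {n m : ℕ} (hn : 0 < n) (hm : m ∈ clSet (g ^ n)) :
    sclE g ≤ m / n :=
  (iInf_le _ ⟨n, hn⟩).trans (ENNReal.div_le_div_right (clE_le_of_mem_clSet hm) _)

theorem sclE_eq_zero_of_isConj_inv {g : G} (h : IsConj g g⁻¹) : sclE g = 0 := by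
  obtain ⟨c, hc⟩ := isConj_iff.1 h
  have hcl (n : ℕ) : 1 ∈ clSet (g ^ (2 * n)) := by
    refine ⟨fun _ => (g ^ n, c), ?_⟩
    have : c * (g ^ n)⁻¹ * c⁻¹ = g ^ n := by rw [← conj_inv, ← conj_pow, hc, inv_pow, inv_inv]
    rw [List.ofFn_const, List.replicate_one, List.prod_singleton]
    calc g ^ (2 * n) = g ^ n * (c * (g ^ n)⁻¹ * c⁻¹) := by rw [this, two_mul, pow_add]
      _ = ⁅g ^ n, c⁆ := by rw [commutatorElement_def]; group
  by_contra hne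
  obtain ⟨N, hN⟩ := ENNReal.exists_inv_nat_lt hne
  have hle := sclE_le_div_of_mem_clSet (by omega) (hcl (N + 1))
  rw [Nat.cast_one, one_div] at hle
  refine (hN.trans_le hle).not_ge (ENNReal.inv_le_inv.2 ?_)
  exact_mod_cast (by omega : N ≤ 2 * (N + 1))

theorem inv_natCast_le_sclE {g : G} {K : ℕ} (h : ∀ n m, 0 < n → m ∈ clSet (g ^ n) → n ≤ K * m) :
    (K : ℝ≥0∞)⁻¹ ≤ sclE g := by
  refine le_iInf fun n => ?_
  rw [ENNReal.le_div_iff_mul_le (.inl (by simp)) (.inl (by simp))]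
  refine le_sInf ?_
  rintro _ ⟨m, hm, rfl⟩
  have hnm := h n m n.pos hm
  rcases Nat.eq_zero_or_pos K with rfl | hK
  · simp at hnm
  rw [ENNReal.inv_mul_le_iff (by simp [hK.ne']) (by simp)]
  change ((n : ℕ) : ℝ≥0∞) ≤ K * (m : ℝ≥0∞)
  exact_mod_cast hnm

end StableCommutatorLength

namespace Monoid.CoprodI

open List

variable {ι : Type*} {M : ι → Type*} [∀ i, Group (M i)]

/-- The conditions defining `Monoid.CoprodI.Word`, as a predicate on lists of letters. -/
def IsReduced (L : List (Σ i, M i)) : Prop :=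
  (∀ l ∈ L, l.2 ≠ 1) ∧ L.IsChain fun a b => a.1 ≠ b.1

theorem isReduced_nil : IsReduced ([] : List (Σ i, M i)) := ⟨by simp, isChain_nil⟩

theorem isReduced_append {A B : List (Σ i, M i)} :
    IsReduced (A ++ B) ↔
      IsReduced A ∧ IsReduced B ∧ ∀ a ∈ A.getLast?, ∀ b ∈ B.head?, a.1 ≠ b.1 := by
  simp only [IsReduced, isChain_append, mem_append]
  grind

theorem isReduced_cons {a : Σ i, M i} {L : List (Σ i, M i)} :
    IsReduced (a :: L) ↔ a.2 ≠ 1 ∧ IsReduced L ∧ ∀ b ∈ L.head?, a.1 ≠ b.1 := by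
  simp only [IsReduced, isChain_cons, mem_cons]
  grind

def listProd (L : List (Σ i, M i)) : CoprodI M :=
  (L.map fun l => of l.2).prod

@[simp] theorem listProd_nil : listProd ([] : List (Σ i, M i)) = 1 := rfl

@[simp] theorem listProd_cons (a : Σ i, M i) (L : List (Σ i, M i)) :
    listProd (a :: L) = of a.2 * listProd L := by
  simp [listProd]

@[simp] theorem listProd_append (A B : List (Σ i, M i)) :
    listProd (A ++ B) = listProd A * listProd B := by
  simp [listProd]

theorem listProd_flatten_replicate (n : ℕ) (L : List (Σ i, M i)) :
    listProd (replicate n L).flatten = listProd L ^ n := by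
  induction n with
  | zero => simp
  | succ n ih => rw [replicate_succ, flatten_cons, listProd_append, ih, pow_succ']

theorem isConj_listProd_rotate (L : List (Σ i, M i)) (k : ℕ) :
    IsConj (listProd L) (listProd (L.rotate k)) := by
  rw [rotate_eq_drop_append_take_mod, listProd_append, isConj_comm]
  conv_rhs => rw [← take_append_drop (k % L.length) L, listProd_append]
  exact isConj_iff.2 ⟨listProd (L.take (k % L.length)), by group⟩

def letterInv (l : Σ i, M i) : Σ i, M i := ⟨l.1, l.2⁻¹⟩

theorem letterInv_involutive : Function.Involutive (letterInv (M := M)) := fun ⟨_, x⟩ =>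
  congrArg (Sigma.mk _) (inv_inv x)

def listInv (L : List (Σ i, M i)) : List (Σ i, M i) :=
  (L.map letterInv).reverse

@[simp] theorem listInv_nil : listInv ([] : List (Σ i, M i)) = [] := rfl

@[simp] theorem listInv_append (A B : List (Σ i, M i)) :
    listInv (A ++ B) = listInv B ++ listInv A := by
  simp [listInv]

@[simp] theorem listInv_singleton (a : Σ i, M i) : listInv [a] = [letterInv a] := rfl

@[simp] theorem listInv_listInv (L : List (Σ i, M i)) : listInv (listInv L) = L := by
  simp [listInv, map_reverse, letterInv_involutive.comp_self]

@[simp] theorem length_listInv (L : List (Σ i, M i)) : (listInv L).length = L.length := by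
  simp [listInv]

@[simp] theorem listInv_eq_nil {L : List (Σ i, M i)} : listInv L = [] ↔ L = [] := by
  simp [listInv]

@[simp] theorem listProd_listInv (L : List (Σ i, M i)) : listProd (listInv L) = (listProd L)⁻¹ := by
  induction L with
  | nil => simp
  | cons a L ih =>
    rw [← singleton_append, listInv_append, listProd_append, listProd_append, ih]
    simp [listProd, letterInv]

theorem IsReduced.listInv {L : List (Σ i, M i)} (h : IsReduced L) : IsReduced (listInv L) := by
  refine ⟨?_, ?_⟩
  · simp only [CoprodI.listInv, mem_reverse, mem_map]
    rintro _ ⟨l, hl, rfl⟩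
    exact inv_ne_one.2 (h.1 l hl)
  simp only [CoprodI.listInv, isChain_reverse, isChain_map, letterInv]
  exact h.2.imp fun a b hab => Ne.symm hab

noncomputable def toReducedList (g : CoprodI M) : List (Σ i, M i) :=
  (@Word.equiv ι M _ (Classical.decEq ι) (fun i => Classical.decEq (M i)) g).toList

theorem isReduced_toReducedList (g : CoprodI M) : IsReduced (toReducedList g) :=
  ⟨Word.ne_one _, Word.chain_ne _⟩

@[simp] theorem listProd_toReducedList (g : CoprodI M) : listProd (toReducedList g) = g :=
  (@Word.equiv ι M _ (Classical.decEq ι) (fun i => Classical.decEq (M i))).symm_apply_apply g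

theorem IsReduced.toReducedList_listProd {L : List (Σ i, M i)} (h : IsReduced L) :
    toReducedList (listProd L) = L :=
  congrArg Word.toList
    ((@Word.equiv ι M _ (Classical.decEq ι) (fun i => Classical.decEq (M i))).apply_symm_apply
      ⟨L, h.1, h.2⟩)

@[simp] theorem toReducedList_one : toReducedList (1 : CoprodI M) = [] :=
  isReduced_nil.toReducedList_listProd

theorem toReducedList_inv (g : CoprodI M) : toReducedList g⁻¹ = listInv (toReducedList g) := by
  conv_lhs => rw [← listProd_toReducedList g, ← listProd_listInv]
  exact (isReduced_toReducedList g).listInv.toReducedList_listProd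

/-- In the product of two reduced words, a suffix `c` of the first cancels against the prefix
`listInv c` of the second, and at most one further pair of letters merges into one letter. -/
theorem IsReduced.exists_listProd_mul {U V : List (Σ i, M i)} (hU : IsReduced U)
    (hV : IsReduced V) :
    ∃ P mL c mR m S : List (Σ i, M i),
      U = P ++ mL ++ c ∧ V = CoprodI.listInv c ++ mR ++ S ∧
      mL.length ≤ 1 ∧ mR.length ≤ 1 ∧ m.length ≤ 1 ∧
      IsReduced (P ++ m ++ S) ∧ listProd U * listProd V = listProd (P ++ m ++ S) := by
  induction U using List.reverseRecOn generalizing V with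
  | nil => exact ⟨[], [], [], [], [], V, by simp, by simp, by simp, by simp, by simp,
      by simpa using hV, by simp⟩
  | append_singleton U x ih =>
    obtain ⟨hU', -, hUx⟩ := isReduced_append.1 hU
    rcases V with _ | ⟨y, V⟩
    · exact ⟨U ++ [x], [], [], [], [], [], by simp, by simp, by simp, by simp, by simp,
        by simpa using hU, by simp⟩
    obtain ⟨-, hV', hyV⟩ := isReduced_cons.1 hV
    by_cases hxy : x.1 = y.1
    swap
    · refine ⟨U ++ [x], [], [], [], [], y :: V, by simp, by simp, by simp, by simp, by simp,
        ?_, by simp [mul_assoc]⟩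
      rw [append_nil]
      exact isReduced_append.2 ⟨hU, hV, by simpa using hxy⟩
    obtain ⟨i, a⟩ := x
    obtain ⟨j, b⟩ := y
    obtain rfl : i = j := hxy
    by_cases hab : a * b = 1
    · obtain rfl : b = a⁻¹ := eq_inv_of_mul_eq_one_right hab
      obtain ⟨P, mL, c, mR, m, S, rfl, rfl, hmL, hmR, hm, hred, hprod⟩ := ih hU' hV'
      refine ⟨P, mL, c ++ [⟨i, a⟩], mR, m, S, by simp, by simp [letterInv], hmL, hmR, hm, hred,
        ?_⟩
      rw [← hprod]
      simp [mul_assoc]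
    · refine ⟨U, [⟨i, a⟩], [], [⟨i, b⟩], [⟨i, a * b⟩], V, by simp, by simp, by simp, by simp,
        by simp, ?_, ?_⟩
      · refine isReduced_append.2 ⟨isReduced_append.2 ⟨hU', ?_, ?_⟩, hV', ?_⟩
        · exact isReduced_cons.2 ⟨hab, isReduced_nil, by simp⟩
        · simpa using hUx
        · simpa using hyV
      · simp [mul_assoc]

/-- Unlike the usual convention, a word of length one is not cyclically reduced here. -/
def IsCyclicallyReduced (L : List (Σ i, M i)) : Prop :=
  IsReduced L ∧ ∀ a ∈ L.getLast?, ∀ b ∈ L.head?, a.1 ≠ b.1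

theorem IsCyclicallyReduced.isReduced_flatten_replicate {L : List (Σ i, M i)}
    (h : IsCyclicallyReduced L) (n : ℕ) : IsReduced (replicate n L).flatten := by
  induction n with
  | zero => exact isReduced_nil
  | succ n ih =>
    rw [replicate_succ, flatten_cons]
    refine isReduced_append.2 ⟨h.1, ih, fun a ha b hb => h.2 a ha b ?_⟩
    rcases n with _ | n
    · simp at hb
    · rwa [head?_flatten_replicate n.succ_ne_zero] at hb

theorem IsCyclicallyReduced.rotate_one {L : List (Σ i, M i)} (h : IsCyclicallyReduced L) :
    IsCyclicallyReduced (L.rotate 1) := by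
  rcases L with _ | ⟨a, _ | ⟨b, T⟩⟩
  · simpa using h
  · simpa using h
  obtain ⟨hred, hcyc⟩ := h
  obtain ⟨ha, hbT, hab⟩ := isReduced_cons.1 hred
  rw [rotate_cons_succ, rotate_zero]
  refine ⟨isReduced_append.2 ⟨hbT, isReduced_cons.2 ⟨ha, isReduced_nil, by simp⟩, ?_⟩, ?_⟩
  · intro c hc d hd
    simp only [head?_cons, Option.mem_def, Option.some.injEq] at hd
    subst hd
    exact hcyc c (by rwa [getLast?_cons_cons]) a rfl
  · intro c hc d hd
    simp only [getLast?_append, getLast?_singleton, Option.some_or, Option.mem_def,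
      Option.some.injEq, head?_append, head?_cons, Option.some_or] at hc hd
    subst hc hd
    exact hab b rfl

theorem IsCyclicallyReduced.rotate {L : List (Σ i, M i)} (h : IsCyclicallyReduced L) (k : ℕ) :
    IsCyclicallyReduced (L.rotate k) := by
  induction k with
  | zero => simpa using h
  | succ k ih => simpa [rotate_rotate] using ih.rotate_one

theorem IsReduced.exists_isConj_isCyclicallyReduced {L : List (Σ i, M i)} (h : IsReduced L) :
    ∃ L', IsConj (listProd L) (listProd L') ∧ IsReduced L' ∧
      (L'.length ≤ 1 ∨ IsCyclicallyReduced L') := by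
  induction hn : L.length using Nat.strong_induction_on generalizing L with | _ n ih =>
  rcases le_or_gt L.length 1 with hL | hL
  · exact ⟨L, .refl _, h, .inl hL⟩
  rcases L with _ | ⟨a, L⟩
  · simp at hL
  rcases L.eq_nil_or_concat with rfl | ⟨T, b, rfl⟩
  · simp at hL
  rw [concat_eq_append] at *
  by_cases hab : b.1 = a.1
  swap
  · refine ⟨a :: (T ++ [b]), .refl _, h, .inr ⟨h, fun c hc d hd => ?_⟩⟩
    rw [← cons_append, getLast?_concat, Option.mem_some_iff] at hc
    rw [head?_cons, Option.mem_some_iff] at hd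
    subst hc hd
    exact hab
  obtain ⟨i, x⟩ := a
  obtain ⟨j, y⟩ := b
  obtain rfl : i = j := hab.symm
  obtain ⟨hxT, -, hlast⟩ := isReduced_append.1 (by rwa [← cons_append] at h)
  obtain ⟨-, hT, -⟩ := isReduced_cons.1 hxT
  have hconj : IsConj (listProd (⟨i, x⟩ :: (T ++ [⟨i, y⟩]))) (listProd T * of (y * x)) :=
    isConj_iff.2 ⟨(of x)⁻¹, by
      simp only [listProd_cons, listProd_append, listProd_nil, map_mul, mul_one]; group⟩
  by_cases hyx : y * x = 1
  · obtain ⟨L', hL', hred, hcyc⟩ := ih _ (by simp at hn; omega) hT rfl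
    exact ⟨L', hconj.trans (by simpa [hyx] using hL'), hred, hcyc⟩
  · have hT' : IsReduced (T ++ [⟨i, y * x⟩]) := by
      refine isReduced_append.2 ⟨hT, isReduced_cons.2 ⟨hyx, isReduced_nil, by simp⟩, ?_⟩
      intro c hc d hd
      rw [head?_cons, Option.mem_some_iff] at hd
      subst hd
      exact hlast c (by rw [Option.mem_def] at hc; simp [getLast?_cons, hc]) ⟨i, y⟩ rfl
    obtain ⟨L', hL', hred, hcyc⟩ := ih _ (by simp at hn ⊢; omega) hT' rfl
    exact ⟨L', hconj.trans (by simpa using hL'), hred, hcyc⟩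

theorem IsCyclicallyReduced.of_flatten_replicate {V : List (Σ i, M i)} {k : ℕ} (hk : k ≠ 0)
    (h : IsCyclicallyReduced (replicate k V).flatten) : IsCyclicallyReduced V := by
  obtain ⟨k, rfl⟩ := Nat.exists_eq_succ_of_ne_zero hk
  rcases k with _ | k
  · simpa using h
  rw [replicate_succ, flatten_cons] at h
  obtain ⟨hV, -, hadj⟩ := isReduced_append.1 h.1
  exact ⟨hV, fun a ha b hb => hadj a ha b (by rwa [head?_flatten_replicate k.succ_ne_zero])⟩

theorem unbordered_listInv {w : List (Σ i, M i)} (h : Unbordered w) :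
    Unbordered (CoprodI.listInv w) :=
  (h.map letterInv_involutive.injective).reverse

section Brooks

variable [DecidableEq ι] [∀ i, DecidableEq (M i)] {w : List (Σ i, M i)}

theorem countInfix_listInv (hw : w ≠ []) (X : List (Σ i, M i)) :
    countInfix (listInv w) (listInv X) = countInfix w X := by
  rw [listInv, listInv, countInfix_reverse (by simpa using hw),
    countInfix_map letterInv_involutive.injective]

/-- Brooks' counting quasimorphism. -/
noncomputable def brooks (w : List (Σ i, M i)) (g : CoprodI M) : ℤ :=
  countInfix w (toReducedList g) - countInfix (listInv w) (toReducedList g)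

@[simp] theorem brooks_one : brooks w 1 = 0 := by
  simp [brooks]

theorem brooks_inv (hw : w ≠ []) (g : CoprodI M) : brooks w g⁻¹ = -brooks w g := by
  have hw' : listInv w ≠ [] := by simpa using hw
  simp only [brooks, toReducedList_inv, countInfix_listInv hw]
  rw [← countInfix_listInv hw' (toReducedList g), listInv_listInv]
  ring

theorem brooks_mul_le (hub : Unbordered w) (hw : w ≠ []) (u v : CoprodI M) :
    brooks w (u * v) ≤ brooks w u + brooks w v + 3 := by
  have hw' : listInv w ≠ [] := by simpa using hw
  -- the words of `u`, `v`, `u * v` are `P mL c`, `c⁻¹ mR S`, `P m S`, and each count of `w` or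
  -- `w⁻¹` in them is the sum of the counts in the long pieces, up to an error in `[0, 1]`
  obtain ⟨P, mL, c, mR, m, S, hu, hv, hmL, hmR, hm, hred, hprod⟩ :=
    (isReduced_toReducedList u).exists_listProd_mul (isReduced_toReducedList v)
  rw [listProd_toReducedList, listProd_toReducedList] at hprod
  have huv : toReducedList (u * v) = P ++ m ++ S := by rw [hprod, hred.toReducedList_listProd]
  have hc : countInfix w (listInv c) = countInfix (listInv w) c := by
    rw [← countInfix_listInv hw' c, listInv_listInv]
  have hc' : countInfix (listInv w) (listInv c) = countInfix w c := countInfix_listInv hw c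
  have e1 := hub.countInfix_append_le hw P S hm
  have e2 := countInfix_add_countInfix_le (listInv w) hw' P m S
  have e3 := countInfix_add_countInfix_le w hw P mL c
  have e4 := (unbordered_listInv hub).countInfix_append_le hw' P c hmL
  have e5 := countInfix_add_countInfix_le w hw (listInv c) mR S
  have e6 := (unbordered_listInv hub).countInfix_append_le hw' (listInv c) S hmR
  rw [← huv] at e1 e2
  rw [← hu] at e3 e4
  rw [← hv] at e5 e6
  simp only [brooks]
  omega

theorem brooks_list_prod_le (hub : Unbordered w) (hw : w ≠ []) (l : List (CoprodI M)) :
    brooks w l.prod ≤ (l.map (brooks w)).sum + 3 * l.length := by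
  induction l with
  | nil => simp
  | cons a l ih =>
    have := brooks_mul_le hub hw a l.prod
    simp only [List.prod_cons, List.map_cons, List.sum_cons, List.length_cons]
    omega

theorem brooks_commutatorElement_le (hub : Unbordered w) (hw : w ≠ [])
    (a b : CoprodI M) : brooks w ⁅a, b⁆ ≤ 9 := by
  have h1 := brooks_mul_le hub hw (a * b * a⁻¹) b⁻¹
  have h2 := brooks_mul_le hub hw (a * b) a⁻¹
  have h3 := brooks_mul_le hub hw a b
  rw [commutatorElement_def]
  linarith [brooks_inv hw a, brooks_inv hw b]

theorem brooks_le_of_mem_clSet (hub : Unbordered w) (hw : w ≠ []) {g : CoprodI M}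
    {m : ℕ} (hm : m ∈ clSet g) : brooks w g ≤ 12 * m := by
  obtain ⟨F, rfl⟩ := hm
  set l := List.ofFn fun i => ⁅(F i).1, (F i).2⁆
  have hsum := List.sum_le_card_nsmul (l.map (brooks w)) 9 (by
    simpa [l] using fun i => brooks_commutatorElement_le hub hw (F i).1 (F i).2)
  have := brooks_list_prod_le hub hw l
  simp only [List.length_map, List.length_ofFn, nsmul_eq_mul, l] at hsum this
  linarith

/-- Since `listProd w` is not conjugate to its inverse, `listInv w` never occurs in a power
of `w`, as it would have to be a rotation of `w`. -/
theorem IsCyclicallyReduced.le_brooks_pow (hcyc : IsCyclicallyReduced w) (hw : w ≠ [])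
    (hinv : ¬IsConj (listProd w) (listProd w)⁻¹) (n : ℕ) : n ≤ brooks w (listProd w ^ n) := by
  have hword : toReducedList (listProd w ^ n) = (replicate n w).flatten := by
    rw [← listProd_flatten_replicate, (hcyc.isReduced_flatten_replicate n).toReducedList_listProd]
  have hinv0 : countInfix (listInv w) (replicate n w).flatten = 0 := by
    refine Finset.card_eq_zero.2 (Finset.eq_empty_of_forall_notMem fun i hi => hinv ?_)
    rw [← listProd_listInv,
      eq_rotate_of_mem_infixPositions_flatten_replicate (length_listInv w) hi]
    exact isConj_listProd_rotate w i
  simp only [brooks, hword, hinv0]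
  have := le_countInfix_flatten_replicate hw n
  omega

end Brooks

theorem exists_isConj_listProd_pow {g : CoprodI M} (hg : ∀ i (x : M i), ¬IsConj (of x) g)
    (hg1 : g ≠ 1) :
    ∃ w k, 0 < k ∧ w ≠ [] ∧ IsCyclicallyReduced w ∧ Unbordered w ∧
      IsConj g (listProd w ^ k) := by
  obtain ⟨L, hconj, -, hcyc⟩ := (isReduced_toReducedList g).exists_isConj_isCyclicallyReduced
  rw [listProd_toReducedList] at hconj
  rcases L with _ | ⟨a, _ | ⟨b, T⟩⟩
  · exact absurd (isConj_one_left.1 hconj) hg1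
  · exact absurd (by simpa using hconj.symm) (hg a.1 a.2)
  replace hcyc : IsCyclicallyReduced (a :: b :: T) := hcyc.resolve_left (by simp)
  obtain ⟨V, k, hV, hVk⟩ := exists_isPrimitive_flatten_replicate (cons_ne_nil a (b :: T))
  have hk : k ≠ 0 := by rintro rfl; simp at hVk
  obtain ⟨d, hub⟩ := hV.exists_unbordered_rotate
  refine ⟨V.rotate d, k, Nat.pos_of_ne_zero hk, by simpa using hV.ne_nil,
    (IsCyclicallyReduced.of_flatten_replicate hk (hVk ▸ hcyc)).rotate d, hub, ?_⟩
  rw [← hVk, listProd_flatten_replicate] at hconj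
  exact hconj.trans ((isConj_listProd_rotate V d).pow k)

theorem le_twelve_mul_of_mem_clSet_pow {g : CoprodI M} (hg : ∀ i (x : M i), ¬IsConj (of x) g)
    (hinv : ¬IsConj g g⁻¹) (n m : ℕ) (hm : m ∈ clSet (g ^ n)) : n ≤ 12 * m := by
  classical
  obtain ⟨w, k, hk, hw, hcyc, hub, hconj⟩ :=
    exists_isConj_listProd_pow hg fun h1 => hinv (by simp [h1])
  have hy : ¬IsConj (listProd w) (listProd w)⁻¹ := fun h =>
    hinv (hconj.trans ((h.pow k).trans (by rw [inv_pow]; exact hconj.inv.symm)))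
  have hm' : m ∈ clSet (listProd w ^ (k * n)) := by
    rw [pow_mul]
    exact (hconj.pow n).mem_clSet hm
  have hupper := brooks_le_of_mem_clSet hub hw hm'
  have hlower := hcyc.le_brooks_pow hw hy (k * n)
  push_cast at hlower
  nlinarith

end Monoid.CoprodI

variable {ι : Type*} {M : ι → Type*} [∀ i, Group (M i)] [∀ i, IsCyclic (M i)]

/-- Spectral gap for elements of free products of cyclic groups: if `g` is not conjugate
into any free factor, then `scl(g) ≥ 1/12` or `scl(g) = 0`, and the latter happens exactly
when `g` is conjugate to `g⁻¹`. -/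
theorem scl_gap_free_product_of_cyclic (g : CoprodI M)
    (hg : ∀ (i : ι) (x : M i), ¬ IsConj (CoprodI.of x) g) :
    ((1 / 12 : ℝ≥0∞) ≤ sclE g ∨ sclE g = 0) ∧ (sclE g = 0 ↔ IsConj g g⁻¹) := by
  by_cases hinv : IsConj g g⁻¹
  · have h0 := sclE_eq_zero_of_isConj_inv hinv
    exact ⟨.inr h0, iff_of_true h0 hinv⟩
  have hgap : (1 / 12 : ℝ≥0∞) ≤ sclE g := by
    simpa using inv_natCast_le_sclE fun n m _ => CoprodI.le_twelve_mul_of_mem_clSet_pow hg hinv n m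
  exact ⟨.inl hgap, iff_of_false (fun h0 => by simp [h0] at hgap) hinv⟩
end

section
/- Let Γ be a torsion-free discrete subgroup of Isom⁺(ℍ^n) and suppose a, a', b ∈ Γ are nontrivial such that for two distinct integers k, the elements b^{-k}a^{-1}, a'b^k, a^{-1}a' lie in a common cyclic subgroup. If a^{-1}a' is parabolic, then b is parabolic fixing the same point at infinity. -/
open Matrix

/-- The Minkowski bilinear form of signature `(1, n)` on `ℝ^{n+1}`. -/
noncomputable def mink (n : ℕ) (u v : Fin (n + 1) → ℝ) : ℝ :=
  u 0 * v 0 - ∑ i : Fin n, u i.succ * v i.succ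

/-- The upper sheet of the hyperboloid: the hyperboloid model of hyperbolic `n`-space `ℍⁿ`. -/
def InSheet (n : ℕ) (v : Fin (n + 1) → ℝ) : Prop :=
  mink n v v = 1 ∧ 0 < v 0

/-- The hyperbolic distance `d(x, y) = arcosh(⟨x, y⟩)` on the hyperboloid model. -/
noncomputable def distH (n : ℕ) (x y : Fin (n + 1) → ℝ) : ℝ :=
  Real.log (mink n x y + Real.sqrt ((mink n x y) ^ 2 - 1))

/-- A matrix belongs to `Isom⁺(ℍⁿ) = SO⁺(1, n)` if it preserves the Minkowski form,
preserves the upper sheet of the hyperboloid, and has determinant one. -/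
def IsIsomPlus (n : ℕ) (A : GL (Fin (n + 1)) ℝ) : Prop :=
  (∀ u v, mink n (A.val.mulVec u) (A.val.mulVec v) = mink n u v) ∧
    (∀ v, InSheet n v → InSheet n (A.val.mulVec v)) ∧ A.val.det = 1

/-- The translation length of an isometry of `ℍⁿ`. -/
noncomputable def transLen (n : ℕ) (A : GL (Fin (n + 1)) ℝ) : ℝ :=
  sInf {d : ℝ | ∃ v, InSheet n v ∧ d = distH n (A.val.mulVec v) v}

/-- An isometry of `ℍⁿ` is hyperbolic (loxodromic) if its translation length is positive. -/
def IsHyperbolicIso (n : ℕ) (A : GL (Fin (n + 1)) ℝ) : Prop :=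
  0 < transLen n A

/-- An isometry of `ℍⁿ` is parabolic if its translation length is zero and it has no fixed
point in `ℍⁿ`. -/
def IsParabolicIso (n : ℕ) (A : GL (Fin (n + 1)) ℝ) : Prop :=
  transLen n A = 0 ∧ ∀ v, InSheet n v → A.val.mulVec v ≠ v

/-!
Put `c = a⁻¹a'` and `B = b ^ (k' - k)`. Since `c` and `a'bʲ` lie in a common cyclic group for
`j = k, k'`, the element `c` commutes with `B`.

A parabolic isometry fixes a ray `x` of the light cone, with eigenvalue one: an eigenvalue `t` on
a fixed ray forces the displacement `cosh d ≥ (t + t⁻¹) / 2` everywhere, and two fixed rays would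
give a fixed point of `ℍⁿ` between them. So `x` is the only fixed ray of `c`, and `B` fixes it.
If `b` moved `x`, then `B` would fix the two rays `x` and `b x`, hence a point of `ℍⁿ`; stabilizers
of points are compact, so `B` would have finite order in the discrete group `Γ`, against
torsion-freeness. Thus `b` fixes `x`; for the same reason `b` fixes no point of `ℍⁿ`, and its
displacement tends to zero along a horocyclic path towards `x`.
-/

variable {n : ℕ}

section Minkowski

variable {u v w x y : Fin (n + 1) → ℝ}

lemma mink_comm (u v : Fin (n + 1) → ℝ) : mink n u v = mink n v u := by
  simp only [mink, mul_comm]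

lemma mink_add_left (u w v : Fin (n + 1) → ℝ) :
    mink n (u + w) v = mink n u v + mink n w v := by
  simp only [mink, Pi.add_apply, add_mul, Finset.sum_add_distrib]; ring

lemma mink_add_right (v u w : Fin (n + 1) → ℝ) :
    mink n v (u + w) = mink n v u + mink n v w := by
  rw [mink_comm, mink_add_left, mink_comm u, mink_comm w]

lemma mink_smul_left (r : ℝ) (u v : Fin (n + 1) → ℝ) : mink n (r • u) v = r * mink n u v := by
  simp only [mink, Pi.smul_apply, smul_eq_mul, mul_sub, Finset.mul_sum, mul_assoc]

lemma mink_smul_right (r : ℝ) (u v : Fin (n + 1) → ℝ) : mink n u (r • v) = r * mink n u v := by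
  rw [mink_comm, mink_smul_left, mink_comm]

lemma mink_sub_left (u w v : Fin (n + 1) → ℝ) :
    mink n (u - w) v = mink n u v - mink n w v := by
  simp only [mink, Pi.sub_apply, sub_mul, Finset.sum_sub_distrib]; ring

lemma mink_sub_right (v u w : Fin (n + 1) → ℝ) :
    mink n v (u - w) = mink n v u - mink n v w := by
  rw [mink_comm, mink_sub_left, mink_comm u, mink_comm w]

lemma mink_neg_left (u v : Fin (n + 1) → ℝ) : mink n (-u) v = -mink n u v := by
  simpa using mink_smul_left (-1) u v

lemma mink_single_zero_right (u : Fin (n + 1) → ℝ) : mink n u (Pi.single 0 1) = u 0 := by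
  simp [mink, Fin.succ_ne_zero]

lemma inSheet_single_zero : InSheet n (Pi.single 0 1) := by
  simp [InSheet, mink_single_zero_right]

@[fun_prop]
lemma Continuous.mink {X : Type*} [TopologicalSpace X] {f g : X → Fin (n + 1) → ℝ}
    (hf : Continuous f) (hg : Continuous g) : Continuous fun a => mink n (f a) (g a) := by
  unfold _root_.mink
  fun_prop

lemma exists_mink_eq_dotProduct (z : Fin (n + 1) → ℝ) :
    ∃ y : Fin (n + 1) → ℝ, ∀ w, mink n w y = w ⬝ᵥ z :=
  ⟨Fin.cons (z 0) fun i => -z i.succ, fun w => by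
    simp [mink, dotProduct, Fin.sum_univ_succ]⟩

lemma eq_zero_of_forall_mink_eq_zero (h : ∀ w, mink n w y = 0) : y = 0 := by
  obtain ⟨z, hz⟩ := exists_mink_eq_dotProduct (n := n) y
  rw [← dotProduct_self_eq_zero, ← hz, mink_comm, h]

lemma mink_self (u : Fin (n + 1) → ℝ) : mink n u u = u 0 ^ 2 - ∑ i : Fin n, u i.succ ^ 2 := by
  simp only [mink, sq]

lemma sq_apply_le_two_mul_sq_sub_mink (v : Fin (n + 1) → ℝ) (l : Fin (n + 1)) :
    v l ^ 2 ≤ 2 * v 0 ^ 2 - mink n v v := by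
  rw [mink_self]
  have hsum := Finset.sum_nonneg (s := Finset.univ) fun (i : Fin n) _ => sq_nonneg (v i.succ)
  cases l using Fin.cases with
  | zero => linarith
  | succ i =>
    nlinarith [Finset.single_le_sum (fun (j : Fin n) _ => sq_nonneg (v j.succ))
      (Finset.mem_univ i), sq_nonneg (v 0)]

lemma mink_self_nonpos_of_apply_zero_eq_zero (h : w 0 = 0) : mink n w w ≤ 0 := by
  rw [mink_self, h]
  nlinarith [Finset.sum_nonneg (s := Finset.univ) fun (i : Fin n) _ => sq_nonneg (w i.succ)]

lemma eq_zero_of_mink_self_eq_zero_of_apply_zero (h0 : w 0 = 0) (h : mink n w w = 0) : w = 0 := by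
  rw [mink_self, h0, zero_pow two_ne_zero, zero_sub, neg_eq_zero,
    Finset.sum_eq_zero_iff_of_nonneg fun i _ => sq_nonneg _] at h
  ext j
  cases j using Fin.cases with
  | zero => exact h0
  | succ i => exact pow_eq_zero_iff two_ne_zero |>.mp (h i (Finset.mem_univ i))

/-- The vector `x 0 • w - w 0 • x` has vanishing time coordinate, hence nonpositive square. -/
lemma mink_orthogonal_bound (hw : mink n w x = 0) :
    x 0 ^ 2 * mink n w w + w 0 ^ 2 * mink n x x ≤ 0 := by
  have h := mink_self_nonpos_of_apply_zero_eq_zero (w := x 0 • w - w 0 • x) (by simp; ring)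
  simp only [mink_sub_left, mink_sub_right, mink_smul_left, mink_smul_right, mink_comm x w,
    hw] at h
  linarith

lemma mink_self_nonpos_of_orthogonal (hx : 0 ≤ mink n x x) (hx0 : x 0 ≠ 0)
    (hw : mink n w x = 0) : mink n w w ≤ 0 := by
  have := mink_orthogonal_bound hw
  have : 0 < x 0 ^ 2 := by positivity
  nlinarith [sq_nonneg (w 0)]

lemma eq_zero_of_orthogonal_of_timelike (hx : 0 < mink n x x) (hw : mink n w x = 0)
    (hww : 0 ≤ mink n w w) : w = 0 := by
  have hb := mink_orthogonal_bound hw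
  have hsq : w 0 ^ 2 ≤ 0 := by nlinarith [mul_nonneg (sq_nonneg (x 0)) hww]
  have hw0 : w 0 = 0 := pow_eq_zero_iff two_ne_zero |>.mp (le_antisymm hsq (sq_nonneg _))
  exact eq_zero_of_mink_self_eq_zero_of_apply_zero hw0
    (le_antisymm (mink_self_nonpos_of_apply_zero_eq_zero hw0) hww)

lemma mink_nonneg_of_causal (hu : 0 ≤ mink n u u) (hu0 : 0 ≤ u 0) (hv : 0 ≤ mink n v v)
    (hv0 : 0 ≤ v 0) : 0 ≤ mink n u v := by
  have hsp : ∀ w : Fin (n + 1) → ℝ, 0 ≤ mink n w w → 0 ≤ w 0 →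
      √(∑ i : Fin n, w i.succ ^ 2) ≤ w 0 := fun w hw hw0 =>
    Real.sqrt_le_iff.mpr ⟨hw0, by rw [mink_self] at hw; linarith⟩
  have hcs :=
    Real.sum_mul_le_sqrt_mul_sqrt Finset.univ (fun i : Fin n => u i.succ) (fun i => v i.succ)
  have := mul_le_mul (hsp u hu hu0) (hsp v hv hv0) (Real.sqrt_nonneg _) hu0
  simp only [mink]
  linarith

end Minkowski

/-- Future light-like vectors: their rays are the points at infinity of `ℍⁿ`. -/
def IsFutureNull (n : ℕ) (x : Fin (n + 1) → ℝ) : Prop :=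
  mink n x x = 0 ∧ 0 < x 0

section Cone

variable {u v x y : Fin (n + 1) → ℝ}

lemma InSheet.abs_le (hu : InSheet n u) (l : Fin (n + 1)) : |u l| ≤ u 0 := by
  refine abs_le_of_sq_le_sq ?_ hu.2.le
  cases l using Fin.cases with
  | zero => exact le_rfl
  | succ i =>
    have h := hu.1
    rw [mink_self] at h
    nlinarith [Finset.single_le_sum (fun (j : Fin n) _ => sq_nonneg (u j.succ))
      (Finset.mem_univ i)]

lemma InSheet.one_le_mink (hu : InSheet n u) (hv : InSheet n v) : 1 ≤ mink n u v := by
  have hm := mink_nonneg_of_causal (hu.1 ▸ zero_le_one) hu.2.le (hv.1 ▸ zero_le_one) hv.2.le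
  have h := mink_self_nonpos_of_orthogonal (w := v - mink n u v • u) (hu.1 ▸ zero_le_one)
    hu.2.ne' (by simp [mink_sub_left, mink_smul_left, hu.1, mink_comm v u])
  simp only [mink_sub_left, mink_sub_right, mink_smul_left, mink_smul_right, hu.1, hv.1,
    mink_comm v u] at h
  nlinarith

lemma InSheet.eq_of_mink_eq_one (hu : InSheet n u) (hv : InSheet n v) (h : mink n u v = 1) :
    u = v := by
  have hvu : mink n v u = 1 := by rw [mink_comm, h]
  refine sub_eq_zero.mp (eq_zero_of_orthogonal_of_timelike (x := v) (hv.1 ▸ one_pos)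
    (by rw [mink_sub_left, h, hv.1, sub_self]) ?_)
  simp [mink_sub_left, mink_sub_right, hu.1, hv.1, h, hvu]

lemma InSheet.mink_pos (hu : InSheet n u) (hx : IsFutureNull n x) : 0 < mink n u x := by
  refine (mink_nonneg_of_causal (hu.1 ▸ zero_le_one) hu.2.le hx.1.ge hx.2.le).lt_of_ne
    fun h => hx.2.ne' ?_
  have := eq_zero_of_orthogonal_of_timelike (hu.1 ▸ one_pos) (by rw [mink_comm, h]) hx.1.ge
  simp [this]

/-- `cosh d(u, v) ≥ cosh (β u - β v)` for the Busemann function `β = log (mink n · x)`. -/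
lemma InSheet.busemann (hu : InSheet n u) (hv : InSheet n v) (hx : IsFutureNull n x) :
    mink n u x ^ 2 + mink n v x ^ 2 ≤ 2 * mink n u x * mink n v x * mink n u v := by
  have h := mink_self_nonpos_of_orthogonal (w := mink n v x • u - mink n u x • v) hx.1.ge
    hx.2.ne' (by simp only [mink_sub_left, mink_smul_left]; ring)
  simp only [mink_sub_left, mink_sub_right, mink_smul_left, mink_smul_right, hu.1, hv.1,
    mink_comm v u] at h
  nlinarith

lemma inSheet_smul_inv_sqrt (h : 0 < mink n u u) (h0 : 0 < u 0) :
    InSheet n ((√(mink n u u))⁻¹ • u) := by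
  have hs := Real.sqrt_pos.mpr h
  refine ⟨?_, by simpa using mul_pos (inv_pos.mpr hs) h0⟩
  rw [mink_smul_left, mink_smul_right, ← mul_assoc, ← mul_inv, ← sq, Real.sq_sqrt h.le,
    inv_mul_cancel₀ h.ne']

lemma IsFutureNull.ne_zero (hx : IsFutureNull n x) : x ≠ 0 := by
  rintro rfl
  exact hx.2.ne' rfl

lemma isFutureNull_or_isFutureNull_neg (h : mink n y y = 0) (hy : y ≠ 0) :
    IsFutureNull n y ∨ IsFutureNull n (-y) := by
  have hy0 : y 0 ≠ 0 := fun h0 => hy (eq_zero_of_mink_self_eq_zero_of_apply_zero h0 h)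
  rcases hy0.lt_or_gt with hneg | hpos
  · exact .inr ⟨by simp [mink_neg_left, mink_comm y (-y), h], by simpa using hneg⟩
  · exact .inl ⟨h, hpos⟩

lemma IsFutureNull.eq_smul_or_mink_pos (hx : IsFutureNull n x) (hy : IsFutureNull n y) :
    (∃ r : ℝ, 0 < r ∧ x = r • y) ∨ 0 < mink n x y := by
  rcases (mink_nonneg_of_causal hx.1.ge hx.2.le hy.1.ge hy.2.le).lt_or_eq with h | h
  · exact .inr h
  refine .inl ⟨x 0 / y 0, div_pos hx.2 hy.2, ?_⟩
  have hw := eq_zero_of_mink_self_eq_zero_of_apply_zero (w := y 0 • x - x 0 • y) (by simp; ring) (by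
    simp only [mink_sub_left, mink_sub_right, mink_smul_left, mink_smul_right, hx.1, hy.1,
      mink_comm y x, ← h]
    ring)
  rw [sub_eq_zero] at hw
  rw [div_eq_inv_mul, mul_smul, ← hw, smul_smul, inv_mul_cancel₀ hy.2.ne', one_smul]

lemma exists_inSheet_fixed_of_fixes_two {M : Matrix (Fin (n + 1)) (Fin (n + 1)) ℝ}
    (hx : IsFutureNull n x) (hy : IsFutureNull n y) (hxy : 0 < mink n x y)
    (hMx : M *ᵥ x = x) (hMy : M *ᵥ y = y) : ∃ p, InSheet n p ∧ M *ᵥ p = p := by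
  refine ⟨_, inSheet_smul_inv_sqrt (u := x + y) ?_ (by simpa using add_pos hx.2 hy.2), ?_⟩
  · simp only [mink_add_left, mink_add_right, hx.1, hy.1, mink_comm y x]
    linarith
  · rw [mulVec_smul, mulVec_add, hMx, hMy]

end Cone

section Isometry

variable {A B : GL (Fin (n + 1)) ℝ} {x y : Fin (n + 1) → ℝ} {s t : ℝ}

lemma Commute.mulVec_mulVec_comm (h : Commute A B) (w : Fin (n + 1) → ℝ) :
    A.val *ᵥ (B.val *ᵥ w) = B.val *ᵥ (A.val *ᵥ w) := by
  rw [mulVec_mulVec, mulVec_mulVec, ← Units.val_mul, ← Units.val_mul, h.eq]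

lemma mulVec_zpow_of_eigen (h : A.val *ᵥ x = t • x) (ht : t ≠ 0) (m : ℤ) :
    (A ^ m).val *ᵥ x = t ^ m • x := by
  have hinv : A⁻¹.val *ᵥ x = t⁻¹ • x := by
    refine (eq_inv_smul_iff₀ ht).mpr ?_
    rw [← mulVec_smul, ← h]
    simp
  induction m using Int.induction_on with
  | zero => simp
  | succ k ih =>
    rw [_root_.zpow_add_one, Units.val_mul, ← mulVec_mulVec, h, mulVec_smul, ih, smul_smul,
      zpow_add_one₀ ht, mul_comm]
  | pred k ih =>
    rw [_root_.zpow_sub_one, Units.val_mul, ← mulVec_mulVec, hinv, mulVec_smul, ih, smul_smul,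
      zpow_sub_one₀ ht, mul_comm]

lemma IsIsomPlus.isFutureNull_mulVec (hA : IsIsomPlus n A) (hx : IsFutureNull n x) :
    IsFutureNull n (A.val *ᵥ x) := by
  have he := hA.2.1 _ (inSheet_single_zero (n := n))
  have hpair : mink n (A.val *ᵥ x) (A.val *ᵥ Pi.single 0 1) = x 0 := by
    rw [hA.1, mink_single_zero_right]
  have hne : A.val *ᵥ x ≠ 0 := by
    intro h
    rw [h] at hpair
    simp [mink] at hpair
    exact hx.2.ne' hpair.symm
  refine (isFutureNull_or_isFutureNull_neg (by rw [hA.1, hx.1]) hne).resolve_right fun hneg => ?_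
  have := he.mink_pos hneg
  rw [mink_comm, mink_neg_left, hpair] at this
  linarith [hx.2]

lemma IsIsomPlus.eigenvalue_pos (hA : IsIsomPlus n A) (hx : IsFutureNull n x)
    (h : A.val *ᵥ x = t • x) : 0 < t := by
  have := (hA.isFutureNull_mulVec hx).2
  rw [h, Pi.smul_apply, smul_eq_mul] at this
  exact (mul_pos_iff_of_pos_right hx.2).mp this

lemma IsIsomPlus.mul_eq_one_of_eigen (hA : IsIsomPlus n A) (hx : A.val *ᵥ x = s • x)
    (hy : A.val *ᵥ y = t • y) (hxy : mink n x y ≠ 0) : s * t = 1 := by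
  have h := hA.1 x y
  rw [hx, hy, mink_smul_left, mink_smul_right, ← mul_assoc] at h
  exact mul_right_cancel₀ hxy (h.trans (one_mul _).symm)

lemma IsIsomPlus.eq_smul_of_eigen (hA : IsIsomPlus n A) (hx : IsFutureNull n x)
    (hy : IsFutureNull n y) (hAx : A.val *ᵥ x = s • x) (hAy : A.val *ᵥ y = t • y)
    (hst : s * t ≠ 1) : ∃ r : ℝ, 0 < r ∧ x = r • y :=
  (hx.eq_smul_or_mink_pos hy).resolve_right fun h =>
    hst (hA.mul_eq_one_of_eigen hAx hAy h.ne')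

/-- Since `A⁻¹` is the Minkowski adjoint of `A`, the spectrum of `A` is closed under inversion. -/
lemma IsIsomPlus.exists_eigen_inv (hA : IsIsomPlus n A) (hx : x ≠ 0)
    (h : A.val *ᵥ x = s • x) (hs : s ≠ 0) : ∃ y ≠ 0, A.val *ᵥ y = s⁻¹ • y := by
  classical
  have hdet : (A.val - s • 1).det = 0 :=
    exists_mulVec_eq_zero_iff.mp ⟨x, hx, by rw [sub_mulVec, h, smul_mulVec, one_mulVec, sub_self]⟩
  obtain ⟨z, hz, hzA⟩ := exists_vecMul_eq_zero_iff.mpr hdet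
  obtain ⟨y, hy⟩ := exists_mink_eq_dotProduct z
  have hAy : ∀ u, mink n (A.val *ᵥ u) y = s * mink n u y := fun u => by
    have : z ⬝ᵥ (A.val - s • 1) *ᵥ u = 0 := by rw [dotProduct_mulVec, hzA, zero_dotProduct]
    rw [sub_mulVec, smul_mulVec, one_mulVec, dotProduct_sub, dotProduct_smul, sub_eq_zero,
      dotProduct_comm, ← hy, dotProduct_comm, ← hy] at this
    rw [this, smul_eq_mul]
  refine ⟨y, fun h0 => hz ?_, ?_⟩
  · ext i
    simpa [h0, mink] using (hy (Pi.single i 1)).symm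
  · refine (eq_inv_smul_iff₀ hs).mpr (sub_eq_zero.mp (eq_zero_of_forall_mink_eq_zero fun w => ?_))
    have hAinv : A.val *ᵥ (A⁻¹.val *ᵥ w) = w := by simp
    have hw := hAy (A⁻¹.val *ᵥ w)
    rw [hAinv] at hw
    rw [mink_sub_right, mink_smul_right, hw, ← hA.1 (A⁻¹.val *ᵥ w), hAinv, sub_self]

lemma IsIsomPlus.exists_isFutureNull_eigen_inv (hA : IsIsomPlus n A) (hx : IsFutureNull n x)
    (h : A.val *ᵥ x = s • x) (hs : s * s ≠ 1) : ∃ y, IsFutureNull n y ∧ A.val *ᵥ y = s⁻¹ • y := by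
  obtain ⟨y, hy, hAy⟩ := hA.exists_eigen_inv hx.ne_zero h (hA.eigenvalue_pos hx h).ne'
  have hnull : mink n y y = 0 := by
    by_contra hyy
    exact hs (by rw [← inv_eq_one, mul_inv, hA.mul_eq_one_of_eigen hAy hAy hyy])
  rcases isFutureNull_or_isFutureNull_neg hnull hy with hfut | hfut
  · exact ⟨y, hfut, hAy⟩
  · exact ⟨-y, hfut, by rw [mulVec_neg, hAy, smul_neg]⟩

end Isometry

section TranslationLength

open Filter Topology

variable {A : GL (Fin (n + 1)) ℝ} {x : Fin (n + 1) → ℝ} {s t : ℝ}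

lemma transLen_eq_zero_iff (hA : IsIsomPlus n A) :
    transLen n A = 0 ↔ ∃ v : ℕ → Fin (n + 1) → ℝ, (∀ i, InSheet n (v i)) ∧
      Tendsto (fun i => mink n (A.val *ᵥ v i) (v i)) atTop (𝓝 1) := by
  have hS : {d | ∃ v, InSheet n v ∧ d = distH n (A.val *ᵥ v) v}.Nonempty :=
    ⟨_, _, inSheet_single_zero, rfl⟩
  have hpos : ∀ d ∈ {d | ∃ v, InSheet n v ∧ d = distH n (A.val *ᵥ v) v}, 0 ≤ d := by
    rintro _ ⟨v, hv, rfl⟩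
    exact Real.arcosh_nonneg ((hA.2.1 v hv).one_le_mink hv)
  constructor
  · intro h
    obtain ⟨d, -, hd, hdS⟩ := exists_seq_tendsto_sInf hS ⟨0, hpos⟩
    choose v hv hdv using hdS
    refine ⟨v, hv, ?_⟩
    rw [transLen] at h
    rw [h] at hd
    have := (Real.continuous_cosh.tendsto 0).comp hd
    rw [Real.cosh_zero] at this
    refine this.congr fun i => ?_
    rw [Function.comp_apply, hdv i, distH, ← Real.arcosh,
      Real.cosh_arcosh ((hA.2.1 _ (hv i)).one_le_mink (hv i))]
  · rintro ⟨v, hv, hlim⟩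
    have hd : Tendsto (fun i => distH n (A.val *ᵥ v i) (v i)) atTop (𝓝 0) := by
      rw [← Real.arcosh_zero]
      exact (Real.continuousOn_arcosh.continuousWithinAt Set.self_mem_Ici).tendsto.comp
        (tendsto_nhdsWithin_iff.mpr
          ⟨hlim, .of_forall fun i => (hA.2.1 _ (hv i)).one_le_mink (hv i)⟩)
    exact le_antisymm (ge_of_tendsto hd (.of_forall fun i => csInf_le ⟨0, hpos⟩ ⟨v i, hv i, rfl⟩))
      (le_csInf hS hpos)

lemma IsIsomPlus.add_inv_le_mink (hA : IsIsomPlus n A) (hx : IsFutureNull n x)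
    (h : A.val *ᵥ x = t • x) (ht : 0 < t) {v : Fin (n + 1) → ℝ} (hv : InSheet n v) :
    t + t⁻¹ ≤ 2 * mink n (A.val *ᵥ v) v := by
  have hb := (hA.2.1 v hv).busemann hv hx
  have hpair : t * mink n (A.val *ᵥ v) x = mink n v x := by
    rw [← mink_smul_right, ← h, hA.1]
  have ha := (hA.2.1 v hv).mink_pos hx
  rw [← hpair] at hb
  have key : 1 + t ^ 2 ≤ 2 * t * mink n (A.val *ᵥ v) v :=
    le_of_mul_le_mul_left (by nlinarith) (pow_pos ha 2)
  refine le_of_mul_le_mul_left ?_ ht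
  rw [mul_add, mul_inv_cancel₀ ht.ne']
  linarith

lemma IsParabolicIso.eigenvalue_eq_one (hA : IsIsomPlus n A) (hP : IsParabolicIso n A)
    (hx : IsFutureNull n x) (h : A.val *ᵥ x = t • x) : t = 1 := by
  by_contra ht1
  have ht := hA.eigenvalue_pos hx h
  obtain ⟨v, hv, hlim⟩ := (transLen_eq_zero_iff hA).mp hP.1
  have hle : t + t⁻¹ ≤ 2 * 1 :=
    ge_of_tendsto (hlim.const_mul 2) (.of_forall fun i => hA.add_inv_le_mink hx h ht (hv i))
  have := mul_le_mul_of_nonneg_left hle ht.le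
  rw [mul_add, mul_inv_cancel₀ ht.ne'] at this
  nlinarith [sq_pos_of_ne_zero (sub_ne_zero.mpr ht1)]

lemma IsParabolicIso.eq_smul_of_eigen (hA : IsIsomPlus n A) (hP : IsParabolicIso n A)
    {y : Fin (n + 1) → ℝ} (hx : IsFutureNull n x) (hy : IsFutureNull n y)
    (hAx : A.val *ᵥ x = s • x) (hAy : A.val *ᵥ y = t • y) : ∃ r : ℝ, 0 < r ∧ x = r • y := by
  refine (hx.eq_smul_or_mink_pos hy).resolve_right fun hxy => ?_
  rw [hP.eigenvalue_eq_one hA hx hAx, one_smul] at hAx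
  rw [hP.eigenvalue_eq_one hA hy hAy, one_smul] at hAy
  obtain ⟨p, hp, hAp⟩ := exists_inSheet_fixed_of_fixes_two hx hy hxy hAx hAy
  exact hP.2 p hp hAp

/-- Rescale a sequence with displacement tending to zero to `v 0 = 1` and extract a convergent
subsequence. -/
lemma exists_mink_eq_of_transLen_eq_zero (hA : IsIsomPlus n A) (h : transLen n A = 0) :
    ∃ x : Fin (n + 1) → ℝ, x 0 = 1 ∧ 0 ≤ mink n x x ∧ mink n (A.val *ᵥ x) x = mink n x x := by
  obtain ⟨v, hv, hlim⟩ := (transLen_eq_zero_iff hA).mp h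
  set w : ℕ → Fin (n + 1) → ℝ := fun i => (v i 0)⁻¹ • v i
  have hw0 : ∀ i, w i 0 = 1 := fun i => by simp [w, (hv i).2.ne']
  have hwbox : ∀ i, w i ∈ Set.univ.pi fun _ => Set.Icc (-1 : ℝ) 1 := fun i l _ => by
    rw [Set.mem_Icc, ← abs_le]
    simpa [w, abs_mul, abs_of_pos (hv i).2, inv_mul_le_one₀ (hv i).2] using (hv i).abs_le l
  have hwmink : ∀ i, mink n (A.val *ᵥ w i) (w i) =
      mink n (A.val *ᵥ v i) (v i) * mink n (w i) (w i) := fun i => by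
    simp only [w, mulVec_smul, mink_smul_left, mink_smul_right, (hv i).1]
    ring
  obtain ⟨x, -, φ, hφ, hwx⟩ := (isCompact_univ_pi fun _ => isCompact_Icc).tendsto_subseq hwbox
  have hφ' := hφ.tendsto_atTop
  refine ⟨x, ?_, ?_, ?_⟩
  · exact tendsto_nhds_unique (((continuous_apply 0).tendsto x).comp hwx)
      (tendsto_const_nhds.congr fun i => (hw0 (φ i)).symm)
  · refine ge_of_tendsto ((by fun_prop : Continuous fun u => mink n u u).tendsto x |>.comp hwx)
      (.of_forall fun i => ?_)
    simp only [Function.comp_apply, w, mink_smul_left, mink_smul_right, (hv _).1, mul_one]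
    exact mul_self_nonneg _
  · have h1 := (by fun_prop : Continuous fun u => mink n (A.val *ᵥ u) u).tendsto x |>.comp hwx
    have h2 := (hlim.comp hφ').mul
      ((by fun_prop : Continuous fun u => mink n u u).tendsto x |>.comp hwx)
    rw [one_mul] at h2
    exact tendsto_nhds_unique h1 (h2.congr fun i => (hwmink (φ i)).symm)

lemma IsParabolicIso.exists_isFutureNull_fixed (hA : IsIsomPlus n A) (hP : IsParabolicIso n A) :
    ∃ x, IsFutureNull n x ∧ A.val *ᵥ x = x := by
  obtain ⟨x, hx0, hxx, hAx⟩ := exists_mink_eq_of_transLen_eq_zero hA hP.1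
  rcases hxx.lt_or_eq with hpos | hzero
  · exfalso
    have hp := inSheet_smul_inv_sqrt hpos (hx0 ▸ one_pos)
    refine hP.2 _ hp ((hA.2.1 _ hp).eq_of_mink_eq_one hp ?_)
    rw [← hp.1, mulVec_smul]
    simp only [mink_smul_left, mink_smul_right, hAx]
  · have hx : IsFutureNull n x := ⟨hzero.symm, hx0 ▸ one_pos⟩
    obtain ⟨r, -, hAx'⟩ := ((hA.isFutureNull_mulVec hx).eq_smul_or_mink_pos hx).resolve_right
      (by rw [hAx, ← hzero]; exact lt_irrefl 0)
    exact ⟨x, hx, by rw [hAx', hP.eigenvalue_eq_one hA hx hAx', one_smul]⟩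

/-- The displacement tends to zero along the horocyclic path `e + j x` towards the fixed point
at infinity. -/
lemma transLen_eq_zero_of_fixes (hA : IsIsomPlus n A) (hx : IsFutureNull n x)
    (h : A.val *ᵥ x = x) : transLen n A = 0 := by
  set e : Fin (n + 1) → ℝ := Pi.single 0 1
  set q : ℕ → Fin (n + 1) → ℝ := fun j => e + (j : ℝ) • x
  have hex : mink n e x = x 0 := by rw [mink_comm, mink_single_zero_right]
  have hAex : mink n (A.val *ᵥ e) x = x 0 := by rw [← hex, ← hA.1 e x, h]
  have hqq : ∀ j : ℕ, mink n (q j) (q j) = 1 + 2 * j * x 0 := fun j => by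
    simp only [q, mink_add_left, mink_add_right, mink_smul_left, mink_smul_right, hx.1,
      inSheet_single_zero.1, hex, mink_comm x e, e]
    ring
  have hAqq : ∀ j : ℕ, mink n (A.val *ᵥ q j) (q j) = mink n (A.val *ᵥ e) e + 2 * j * x 0 :=
    fun j => by
      simp only [q, mulVec_add, mulVec_smul, h, mink_add_left, mink_add_right, mink_smul_left,
        mink_smul_right, hx.1, hex, hAex, mink_comm x e]
      ring
  have hN : ∀ j : ℕ, 0 < 1 + 2 * j * x 0 := fun j => by have := hx.2; positivity
  refine (transLen_eq_zero_iff hA).mpr ⟨fun j => (√(mink n (q j) (q j)))⁻¹ • q j,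
    fun j => inSheet_smul_inv_sqrt (hqq j ▸ hN j) (by have := hx.2; simp [q, e]; positivity), ?_⟩
  have hNlim : Tendsto (fun j : ℕ => 1 + 2 * j * x 0) atTop atTop :=
    tendsto_atTop_add_const_left _ _ <|
      (tendsto_natCast_atTop_atTop.const_mul_atTop two_pos).atTop_mul_const hx.2
  have := ((tendsto_const_nhds (x := mink n (A.val *ᵥ e) e - 1)).div_atTop hNlim).const_add 1
  rw [add_zero] at this
  refine this.congr fun j => ?_
  rw [mulVec_smul, mink_smul_left, mink_smul_right, hAqq, hqq, ← mul_assoc, ← sq, inv_pow,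
    Real.sq_sqrt (hN j).le]
  field_simp [(hN j).ne']
  ring

end TranslationLength

section Discrete

def isomStabilizer (n : ℕ) (p : Fin (n + 1) → ℝ) :
    Submonoid (Matrix (Fin (n + 1)) (Fin (n + 1)) ℝ) where
  carrier := {M | (∀ u v, mink n (M *ᵥ u) (M *ᵥ v) = mink n u v) ∧ M *ᵥ p = p}
  mul_mem' := by
    rintro M N ⟨hM, hMp⟩ ⟨hN, hNp⟩
    exact ⟨fun u v => by simp only [← mulVec_mulVec, hM, hN], by rw [← mulVec_mulVec, hNp, hMp]⟩
  one_mem' := ⟨fun u v => by simp only [one_mulVec], one_mulVec p⟩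

variable {p : Fin (n + 1) → ℝ}

/-- `2 (mink n v p)² - mink n v v` is the squared Euclidean norm of `v` in a Lorentz frame with
time axis `p`, hence invariant under the stabilizer of `p`. -/
lemma InSheet.sq_apply_le (hp : InSheet n p) (v : Fin (n + 1) → ℝ) (l : Fin (n + 1)) :
    v l ^ 2 ≤ (4 * p 0 ^ 2 + 1) * (2 * mink n v p ^ 2 - mink n v v) := by
  set c := mink n v p
  have hw : mink n (v - c • p) p = 0 := by
    rw [mink_sub_left, mink_smul_left, hp.1, mul_one, sub_self]
  have hb := mink_orthogonal_bound hw
  rw [hp.1, mul_one] at hb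
  have hvv : mink n v v = c ^ 2 + mink n (v - c • p) (v - c • p) := by
    simp only [mink_sub_left, mink_sub_right, mink_smul_left, mink_smul_right, hp.1, mink_comm p v]
    ring
  have hv0 : v 0 ^ 2 ≤ 2 * p 0 ^ 2 * (c ^ 2 - mink n (v - c • p) (v - c • p)) := by
    have : v 0 = (v - c • p) 0 + c * p 0 := by simp
    rw [this]
    nlinarith [sq_nonneg ((v - c • p) 0 - c * p 0)]
  nlinarith [sq_apply_le_two_mul_sq_sub_mink v l, sq_nonneg c]

lemma isCompact_isomStabilizer (hp : InSheet n p) :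
    IsCompact (isomStabilizer n p : Set (Matrix (Fin (n + 1)) (Fin (n + 1)) ℝ)) := by
  classical
  set D : Fin (n + 1) → ℝ := fun j => (4 * p 0 ^ 2 + 1) *
    (2 * mink n (Pi.single j 1) p ^ 2 - mink n (Pi.single j 1) (Pi.single j 1))
  have hclosed : IsClosed (isomStabilizer n p : Set (Matrix (Fin (n + 1)) (Fin (n + 1)) ℝ)) := by
    have : (isomStabilizer n p : Set (Matrix (Fin (n + 1)) (Fin (n + 1)) ℝ)) =
        (⋂ u, ⋂ v, {M | mink n (M *ᵥ u) (M *ᵥ v) = mink n u v}) ∩ {M | M *ᵥ p = p} := by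
      ext M
      simp [isomStabilizer]
    rw [this]
    exact (isClosed_iInter fun u => isClosed_iInter fun v => isClosed_eq (by fun_prop)
      continuous_const).inter (isClosed_eq (by fun_prop) continuous_const)
  refine (isCompact_univ_pi fun i => isCompact_univ_pi fun j =>
    isCompact_Icc (a := -√(D j)) (b := √(D j))).of_isClosed_subset hclosed ?_
  rintro (M : Matrix _ _ ℝ) ⟨hM, hMp⟩ i - j -
  rw [Set.mem_Icc, ← abs_le]
  refine Real.abs_le_sqrt ?_
  have := hp.sq_apply_le (M *ᵥ Pi.single j 1) i
  rwa [← hMp, hM, hMp, hM, mulVec_single_one, col_apply] at this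

/-- The stabilizer of a point of `ℍⁿ` is compact, so it meets the discrete group `Γ` in a finite
subgroup. -/
lemma isOfFinOrder_of_fixes (Γ : Subgroup (GL (Fin (n + 1)) ℝ)) (hdisc : DiscreteTopology Γ)
    (hiso : ∀ g ∈ Γ, IsIsomPlus n g) {g : GL (Fin (n + 1)) ℝ} (hg : g ∈ Γ) (hp : InSheet n p)
    (hgp : g.val *ᵥ p = p) : IsOfFinOrder g := by
  set H := Γ ⊓ (isomStabilizer n p).units
  have hK : IsCompact (H : Set (GL (Fin (n + 1)) ℝ)) :=
    (Submonoid.units_isCompact (isCompact_isomStabilizer hp)).inter_left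
      Subgroup.isClosed_of_discrete
  have : Finite H :=
    (hK.finite ((isDiscrete_iff_discreteTopology.mpr hdisc).mono Set.inter_subset_left)).to_subtype
  have hg'p : g⁻¹.val *ᵥ p = p := by
    conv_lhs => rw [← hgp]
    simp
  have hgH : g ∈ H := ⟨hg, ⟨(hiso g hg).1, hgp⟩, ⟨(hiso _ (inv_mem hg)).1, hg'p⟩⟩
  exact H.subtype.isOfFinOrder (isOfFinOrder_of_finite ⟨g, hgH⟩)

end Discrete

section Commuting

variable {c B : GL (Fin (n + 1)) ℝ} {x : Fin (n + 1) → ℝ}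

lemma Commute.zpow_sub_of_mul_zpow {G : Type*} [Group G] {c d b : G} {k k' : ℤ}
    (hk : Commute c (d * b ^ k)) (hk' : Commute c (d * b ^ k')) : Commute c (b ^ (k' - k)) := by
  have : b ^ (k' - k) = (d * b ^ k)⁻¹ * (d * b ^ k') := by group
  rw [this]
  exact hk.inv_right.mul_right hk'

/-- If `B` scaled the fixed ray of `c` by `s ≠ 1`, then `c` would also fix the ray of the
`s⁻¹`-eigenvector of `B`, giving the parabolic `c` two fixed points at infinity. -/
lemma IsParabolicIso.mulVec_eq_self_of_commute (hc : IsIsomPlus n c) (hP : IsParabolicIso n c)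
    (hB : IsIsomPlus n B) (hcB : Commute c B) (hx : IsFutureNull n x) (hcx : c.val *ᵥ x = x) :
    B.val *ᵥ x = x := by
  have hcx' : c.val *ᵥ x = (1 : ℝ) • x := by rw [hcx, one_smul]
  obtain ⟨s, hs, hBx⟩ := hP.eq_smul_of_eigen hc (hB.isFutureNull_mulVec hx) hx
    (by rw [hcB.mulVec_mulVec_comm, hcx', mulVec_smul]) hcx'
  rw [hBx]
  by_contra hsx
  have hss : s * s ≠ 1 := fun h =>
    hsx (by rw [(mul_self_eq_one_iff.mp h).resolve_right (by linarith), one_smul])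
  obtain ⟨y, hy, hBy⟩ := hB.exists_isFutureNull_eigen_inv hx hBx hss
  obtain ⟨r, -, hcy⟩ := hB.eq_smul_of_eigen (hc.isFutureNull_mulVec hy) hy
    (by rw [← hcB.mulVec_mulVec_comm, hBy, mulVec_smul]) hBy (by rwa [← mul_inv, inv_ne_one])
  obtain ⟨r', -, hxy⟩ := hP.eq_smul_of_eigen hc hx hy hcx' hcy
  have : s • x = s⁻¹ • x := by rw [← hBx, hxy, mulVec_smul, hBy, smul_comm]
  exact hss (by nth_rewrite 2 [smul_left_injective ℝ hx.ne_zero this]; exact mul_inv_cancel₀ hs.ne')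

lemma mulVec_eq_self_of_zpow (Γ : Subgroup (GL (Fin (n + 1)) ℝ)) (hdisc : DiscreteTopology Γ)
    (hiso : ∀ g ∈ Γ, IsIsomPlus n g) (htf : ∀ g ∈ Γ, IsOfFinOrder g → g = 1)
    {b : GL (Fin (n + 1)) ℝ} (hb : b ∈ Γ) (hbne : b ≠ 1) {m : ℤ} (hm : m ≠ 0)
    (hx : IsFutureNull n x) (hbx : (b ^ m).val *ᵥ x = x) : b.val *ᵥ x = x := by
  have hbx' := (hiso b hb).isFutureNull_mulVec hx
  obtain ⟨r, hr, hbr⟩ := (hbx'.eq_smul_or_mink_pos hx).resolve_right fun hpos => by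
    obtain ⟨p, hp, hBp⟩ := exists_inSheet_fixed_of_fixes_two hbx' hx hpos
      (by rw [((Commute.refl b).zpow_left m).mulVec_mulVec_comm, hbx]) hbx
    have hB1 := htf _ (zpow_mem hb m) (isOfFinOrder_of_fixes Γ hdisc hiso (zpow_mem hb m) hp hBp)
    exact hbne (htf b hb (isOfFinOrder_iff_zpow_eq_one.mpr ⟨m, hm, hB1⟩))
  have hrm : r ^ m = 1 := by
    have := mulVec_zpow_of_eigen hbr hr.ne' m
    rw [hbx] at this
    exact smul_left_injective ℝ hx.ne_zero (show r ^ m • x = (1 : ℝ) • x by rw [one_smul, ← this])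
  by_contra hr1
  rw [hbr] at hr1
  exact hm ((zpow_eq_one_iff_right₀ hr.le fun h => hr1 (by rw [h, one_smul])).mp hrm)

end Commuting

theorem parabolic_of_common_cyclic_parabolic_general (n : ℕ)
    (Γ : Subgroup (GL (Fin (n + 1)) ℝ))
    (hdisc : DiscreteTopology Γ)
    (hiso : ∀ g ∈ Γ, IsIsomPlus n g)
    (htf : ∀ g ∈ Γ, IsOfFinOrder g → g = 1)
    (a a' b : GL (Fin (n + 1)) ℝ)
    (ha : a ∈ Γ) (ha' : a' ∈ Γ) (hb : b ∈ Γ)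
    (hbne : b ≠ 1)
    (k k' : ℤ) (hkk' : k ≠ k')
    (hcyc : ∀ j ∈ ({k, k'} : Set ℤ), ∃ z ∈ Γ,
      b ^ (-j) * a⁻¹ ∈ Subgroup.zpowers z ∧ a' * b ^ j ∈ Subgroup.zpowers z ∧
        a⁻¹ * a' ∈ Subgroup.zpowers z)
    (hpar : IsParabolicIso n (a⁻¹ * a')) :
    IsParabolicIso n b ∧
      ∃ x : Fin (n + 1) → ℝ, x ≠ 0 ∧ mink n x x = 0 ∧ 0 < x 0 ∧
        (∃ t : ℝ, 0 < t ∧ (a⁻¹ * a').val.mulVec x = t • x) ∧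
        (∃ t : ℝ, 0 < t ∧ b.val.mulVec x = t • x) := by
  have hc := hiso _ (mul_mem (inv_mem ha) ha')
  have hcommute : ∀ j ∈ ({k, k'} : Set ℤ), Commute (a⁻¹ * a') (a' * b ^ j) := fun j hj => by
    obtain ⟨z, -, -, hbz, hcz⟩ := hcyc j hj
    exact setLike_mul_comm hcz hbz
  have hcB := (hcommute k (by simp)).zpow_sub_of_mul_zpow (hcommute k' (by simp))
  obtain ⟨x, hx, hcx⟩ := hpar.exists_isFutureNull_fixed hc
  have hBx := hpar.mulVec_eq_self_of_commute hc (hiso _ (zpow_mem hb _)) hcB hx hcx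
  have hbx := mulVec_eq_self_of_zpow Γ hdisc hiso htf hb hbne (sub_ne_zero.mpr hkk'.symm) hx hBx
  have hb_nofix : ∀ p, InSheet n p → b.val *ᵥ p ≠ p := fun p hp hbp =>
    hbne (htf b hb (isOfFinOrder_of_fixes Γ hdisc hiso hb hp hbp))
  refine ⟨⟨transLen_eq_zero_of_fixes (hiso b hb) hx hbx, hb_nofix⟩, x, hx.ne_zero, hx.1, hx.2,
    ⟨1, one_pos, by rw [one_smul]; exact hcx⟩, ⟨1, one_pos, by rw [one_smul]; exact hbx⟩⟩

/-- Let `Γ` be a torsion-free discrete subgroup of `Isom⁺(ℍⁿ)` and `a, a', b ∈ Γ` nontrivial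
elements such that, for two distinct integers `k`, the elements `b⁻ᵏa⁻¹`, `a'bᵏ`, `a⁻¹a'`
lie in a common cyclic subgroup of `Γ`. If `a⁻¹a'` is parabolic, then `b` is parabolic and
fixes the same point at infinity (a common ray in the forward light cone). -/
theorem parabolic_of_common_cyclic_parabolic (n : ℕ)
    (Γ : Subgroup (GL (Fin (n + 1)) ℝ))
    (hdisc : DiscreteTopology Γ)
    (hiso : ∀ g ∈ Γ, IsIsomPlus n g)
    (htf : ∀ g ∈ Γ, IsOfFinOrder g → g = 1)
    (a a' b : GL (Fin (n + 1)) ℝ)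
    (ha : a ∈ Γ) (ha' : a' ∈ Γ) (hb : b ∈ Γ)
    (hane : a ≠ 1) (ha'ne : a' ≠ 1) (hbne : b ≠ 1)
    (k k' : ℤ) (hkk' : k ≠ k')
    (hcyc : ∀ j ∈ ({k, k'} : Set ℤ), ∃ z ∈ Γ,
      b ^ (-j) * a⁻¹ ∈ Subgroup.zpowers z ∧ a' * b ^ j ∈ Subgroup.zpowers z ∧
        a⁻¹ * a' ∈ Subgroup.zpowers z)
    (hpar : IsParabolicIso n (a⁻¹ * a')) :
    IsParabolicIso n b ∧
      ∃ x : Fin (n + 1) → ℝ, x ≠ 0 ∧ mink n x x = 0 ∧ 0 < x 0 ∧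
        (∃ t : ℝ, 0 < t ∧ (a⁻¹ * a').val.mulVec x = t • x) ∧
        (∃ t : ℝ, 0 < t ∧ b.val.mulVec x = t • x) :=
  parabolic_of_common_cyclic_parabolic_general n Γ hdisc hiso htf a a' b ha ha' hb hbne k k' hkk'
    hcyc hpar
end
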